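/- arXiv:2202.09030 — 5 statements merged into one kernel-verified Lean document; each statement's English description precedes it below -/
import Mathlib

section
/- Two-sided Varshamov–Gilbert lemma: for every positive integer N there exists a subset {ω^(1), …, ω^(H)} of the hypercube {0,1}^N such that log H ≥ N/8 − log 2, and for any distinct j, k ∈ [H] the Hamming distance satisfies N/4 ≤ ρ(ω^(j), ω^(k)) ≤ 3N/4. -/
open Finset

private lemma vg_card_fiber (N : ℕ) (s : Fin N → Bool) (i : ℕ) :
    ({x : Fin N → Bool | hammingDist s x = i} : Finset _).card = N.choose i := by
  classical
  have h1 : (Finset.powersetCard i (univ : Finset (Fin N))).card = N.choose i := by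
    rw [Finset.card_powersetCard, Finset.card_univ, Fintype.card_fin]
  rw [← h1]
  apply Finset.card_bij' (fun x _ => ({j | s j ≠ x j} : Finset (Fin N)))
      (fun T _ => fun j => if j ∈ T then !(s j) else s j)
  · intro x hx
    simp only [Finset.mem_filter, Finset.mem_univ, true_and] at hx
    simpa [Finset.mem_powersetCard_univ, hammingDist] using hx
  · intro T hT
    simp only [Finset.mem_filter, Finset.mem_univ, true_and]
    rw [hammingDist]
    rw [Finset.mem_powersetCard_univ] at hT
    rw [← hT]
    congr 1
    ext j
    by_cases h : j ∈ T <;> simp [h]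
  · intro x hx
    funext j
    by_cases h : s j = x j
    · simp [h]
    · cases hxj : x j <;> cases hsj : s j <;> simp_all
  · intro T hT
    ext j
    by_cases h : j ∈ T <;> simp [h]

private lemma vg_card_near (N : ℕ) (s : Fin N → Bool) :
    ({x : Fin N → Bool | 4 * hammingDist s x < N} : Finset _).card
      = ∑ i ∈ (Finset.range (N+1)).filter (fun i => 4 * i < N), N.choose i := by
  classical
  rw [Finset.card_eq_sum_card_fiberwise (f := fun x => hammingDist s x)
      (t := (Finset.range (N+1)).filter (fun i => 4 * i < N))]
  · apply Finset.sum_congr rfl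
    intro i hi
    simp only [Finset.mem_filter, Finset.mem_range] at hi
    rw [← vg_card_fiber N s i]
    congr 1
    ext x
    simp only [Finset.mem_filter, Finset.mem_univ, true_and]
    constructor
    · rintro ⟨_, h⟩; exact h
    · intro h; exact ⟨by omega, h⟩
  · intro x hx
    simp only [Finset.mem_coe, Finset.mem_filter, Finset.mem_univ, true_and] at hx ⊢
    refine ⟨Finset.mem_range.2 ?_, hx⟩
    have := hammingDist_le_card_fintype (x := s) (y := x)
    simp at this
    omega

private lemma vg_card_far_le (N : ℕ) (s : Fin N → Bool) :
    ({x : Fin N → Bool | 3 * N < 4 * hammingDist s x} : Finset _).card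
      ≤ ({x : Fin N → Bool | 4 * hammingDist s x < N} : Finset _).card := by
  classical
  apply Finset.card_le_card_of_injOn (fun x => fun j => !(x j))
  · intro x hx
    simp only [Finset.mem_coe, Finset.mem_filter, Finset.mem_univ, true_and] at hx ⊢
    have hd : hammingDist s (fun j => !(x j)) = N - hammingDist s x := by
      rw [hammingDist, hammingDist]
      have : (univ.filter (fun j => s j ≠ !(x j))) = (univ.filter (fun j => s j ≠ x j))ᶜ := by
        ext j
        cases hs : s j <;> cases hx : x j <;> simp [hs, hx]
      rw [this, Finset.card_compl]
      simp
    have hle : hammingDist s x ≤ N := by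
      have := hammingDist_le_card_fintype (x := s) (y := x)
      simpa using this
    omega
  · intro x _ y _ h
    funext j
    have := congrFun h j
    simpa using this

private lemma vg_sum_choose_bound (N : ℕ) :
    (∑ i ∈ (Finset.range (N+1)).filter (fun i => 4 * i < N), (N.choose i : ℝ))
      ≤ (3:ℝ) ^ ((N:ℝ)/4) * (4/3) ^ N := by
  have h1 : (∑ i ∈ (Finset.range (N+1)).filter (fun i => 4 * i < N), (N.choose i : ℝ))
      ≤ ∑ i ∈ (Finset.range (N+1)).filter (fun i => 4 * i < N),
          (3:ℝ) ^ ((N:ℝ)/4) * ((1/3) ^ i * (N.choose i : ℝ)) := by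
    apply Finset.sum_le_sum
    intro i hi
    simp only [Finset.mem_filter, Finset.mem_range] at hi
    have hpow : (1:ℝ) ≤ (3:ℝ) ^ ((N:ℝ)/4) * (1/3) ^ i := by
      have heq : (3:ℝ) ^ ((N:ℝ)/4) * (1/3) ^ i = (3:ℝ) ^ ((N:ℝ)/4 - i) := by
        rw [Real.rpow_sub (by norm_num), Real.rpow_natCast]
        ring_nf
        simp only [one_div]
      rw [heq]
      apply Real.one_le_rpow (by norm_num)
      have : (4 * i : ℝ) < N := by exact_mod_cast hi.2
      linarith
    calc (N.choose i : ℝ) = 1 * (N.choose i : ℝ) := by ring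
      _ ≤ ((3:ℝ) ^ ((N:ℝ)/4) * (1/3) ^ i) * (N.choose i : ℝ) := by
          apply mul_le_mul_of_nonneg_right hpow (by positivity)
      _ = (3:ℝ) ^ ((N:ℝ)/4) * ((1/3) ^ i * (N.choose i : ℝ)) := by ring
  have h2 : (∑ i ∈ (Finset.range (N+1)).filter (fun i => 4 * i < N),
          (3:ℝ) ^ ((N:ℝ)/4) * ((1/3) ^ i * (N.choose i : ℝ)))
      ≤ ∑ i ∈ Finset.range (N+1), (3:ℝ) ^ ((N:ℝ)/4) * ((1/3) ^ i * (N.choose i : ℝ)) := by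
    apply Finset.sum_le_sum_of_subset_of_nonneg (Finset.filter_subset _ _)
    intro i _ _
    positivity
  have h3 : (∑ i ∈ Finset.range (N+1), (3:ℝ) ^ ((N:ℝ)/4) * ((1/3) ^ i * (N.choose i : ℝ)))
      = (3:ℝ) ^ ((N:ℝ)/4) * (4/3) ^ N := by
    rw [← Finset.mul_sum]
    congr 1
    have := add_pow ((1:ℝ)/3) 1 N
    simp only [one_pow, mul_one] at this
    rw [show ((4:ℝ)/3) = 1/3 + 1 by norm_num, this]
  linarith

private lemma vg_key : (1:ℝ)/8 ≤ (3/4) * Real.log 3 - Real.log 2 := by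
  have he : Real.exp 1 ≤ 729/256 := by
    have := Real.exp_one_lt_d9
    linarith
  have h1 : (1:ℝ) ≤ Real.log (729/256) := (Real.le_log_iff_exp_le (by norm_num)).2 he
  have h2 : Real.log (729/256 : ℝ) = 6 * Real.log 3 - 8 * Real.log 2 := by
    rw [show (729:ℝ)/256 = 3^6/2^8 by norm_num, Real.log_div (by norm_num) (by norm_num),
      Real.log_pow, Real.log_pow]
    push_cast
    ring
  rw [h2] at h1
  linarith

/-- Two-sided Varshamov–Gilbert lemma: for every positive integer `N` there exist
`H` points `ω^(1), …, ω^(H)` of the hypercube `{0,1}^N` such that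
`log H ≥ N/8 − log 2` and all pairwise Hamming distances of distinct points lie
in `[N/4, 3N/4]`. -/
theorem two_sided_varshamov_gilbert (N : ℕ) (hN : 0 < N) :
    ∃ (H : ℕ) (ω : Fin H → (Fin N → Bool)),
      (N : ℝ) / 8 - Real.log 2 ≤ Real.log H ∧
      ∀ j k : Fin H, j ≠ k →
        (N : ℝ) / 4 ≤ (hammingDist (ω j) (ω k) : ℝ) ∧
          (hammingDist (ω j) (ω k) : ℝ) ≤ 3 * (N : ℝ) / 4 := by
  classical
  -- a maximal "good" set
  set P : Finset (Fin N → Bool) → Prop := fun S => ∀ x ∈ S, ∀ y ∈ S, x ≠ y →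
    N ≤ 4 * hammingDist x y ∧ 4 * hammingDist x y ≤ 3 * N with hP
  have hne : ((univ : Finset (Finset (Fin N → Bool))).filter P).Nonempty :=
    ⟨∅, by simp [hP]⟩
  obtain ⟨S, hS, hmax'⟩ := Finset.exists_maximal hne
  have hmax : ∀ x' ∈ (univ : Finset (Finset (Fin N → Bool))).filter P, ¬ S ⊂ x' :=
    fun x' hx' hlt => hlt.2 (hmax' hx' hlt.1)
  simp only [Finset.mem_filter, Finset.mem_univ, true_and] at hS
  -- every point is "bad-close" to some point of S
  have hcover : ∀ x : Fin N → Bool, ∃ s ∈ S,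
      4 * hammingDist s x < N ∨ 3 * N < 4 * hammingDist s x := by
    intro x
    by_cases hx : x ∈ S
    · exact ⟨x, hx, Or.inl (by simp [hammingDist_self]; omega)⟩
    by_contra hcon
    push_neg at hcon
    have hgood : ∀ s ∈ S, N ≤ 4 * hammingDist s x ∧ 4 * hammingDist s x ≤ 3 * N := by
      intro s hs
      have := hcon s hs
      omega
    have hins : P (insert x S) := by
      intro a ha b hb hab
      rcases Finset.mem_insert.1 ha with ha' | ha' <;>
        rcases Finset.mem_insert.1 hb with hb' | hb'
      · exact absurd (ha'.trans hb'.symm) hab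
      · subst ha'
        have := hgood b hb'
        rwa [hammingDist_comm] at this
      · subst hb'
        exact hgood a ha'
      · exact hS a ha' b hb' hab
    exact hmax _ (Finset.mem_filter.2 ⟨Finset.mem_univ _, hins⟩) (Finset.ssubset_insert hx)
  -- counting
  set Sc : ℕ := ∑ i ∈ (Finset.range (N+1)).filter (fun i => 4 * i < N), N.choose i with hSc
  have hbadcard : ∀ s : Fin N → Bool,
      ({x : Fin N → Bool | 4 * hammingDist s x < N ∨ 3 * N < 4 * hammingDist s x} :
        Finset _).card ≤ 2 * Sc := by
    intro s
    have hsub : ({x : Fin N → Bool | 4 * hammingDist s x < N ∨ 3 * N < 4 * hammingDist s x} :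
        Finset _) ⊆ ({x : Fin N → Bool | 4 * hammingDist s x < N} : Finset _)
          ∪ ({x : Fin N → Bool | 3 * N < 4 * hammingDist s x} : Finset _) := by
      intro x hx
      simp only [Finset.mem_filter, Finset.mem_univ, true_and, Finset.mem_union] at hx ⊢
      tauto
    calc _ ≤ _ := Finset.card_le_card hsub
      _ ≤ _ := Finset.card_union_le _ _
      _ ≤ Sc + Sc := by
          have := vg_card_far_le N s
          have := vg_card_near N s
          omega
      _ = 2 * Sc := by ring
  have hcount : (2:ℕ) ^ N ≤ S.card * (2 * Sc) := by
    have hsub : (univ : Finset (Fin N → Bool)) ⊆ S.biUnion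
        (fun s => ({x : Fin N → Bool |
          4 * hammingDist s x < N ∨ 3 * N < 4 * hammingDist s x} : Finset _)) := by
      intro x _
      obtain ⟨s, hs, hbad⟩ := hcover x
      exact Finset.mem_biUnion.2 ⟨s, hs, by
        simp only [Finset.mem_filter, Finset.mem_univ, true_and]; exact hbad⟩
    calc (2:ℕ) ^ N = (univ : Finset (Fin N → Bool)).card := by
          simp [Finset.card_univ]
      _ ≤ _ := Finset.card_le_card hsub
      _ ≤ ∑ s ∈ S, ({x : Fin N → Bool |
            4 * hammingDist s x < N ∨ 3 * N < 4 * hammingDist s x} : Finset _).card :=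
          Finset.card_biUnion_le
      _ ≤ ∑ _s ∈ S, 2 * Sc := Finset.sum_le_sum (fun s _ => hbadcard s)
      _ = S.card * (2 * Sc) := by rw [Finset.sum_const, smul_eq_mul]
  -- real bound on S.card
  set c : ℝ := (3:ℝ) ^ ((N:ℝ)/4) * (4/3) ^ N with hc
  have hcpos : 0 < c := by
    rw [hc]; positivity
  have hreal : (2:ℝ) ^ N ≤ (S.card : ℝ) * (2 * c) := by
    have h1 : ((2:ℕ) ^ N : ℝ) ≤ (S.card : ℝ) * (2 * (Sc : ℝ)) := by
      exact_mod_cast hcount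
    have h2 : (Sc : ℝ) ≤ c := by
      rw [hSc, hc]
      push_cast
      exact vg_sum_choose_bound N
    push_cast at h1
    nlinarith [Nat.cast_nonneg (α := ℝ) S.card]
  have hHpos : 0 < S.card := by
    by_contra h
    push_neg at h
    interval_cases hcc : S.card
    · simp at hreal
      nlinarith [pow_pos (show (0:ℝ) < 2 by norm_num) N]
  have hlb : (2:ℝ) ^ N / (2 * c) ≤ (S.card : ℝ) := by
    rw [div_le_iff₀ (by positivity)]
    exact hreal
  have hlbpos : (0:ℝ) < (2:ℝ) ^ N / (2 * c) := by positivity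
  -- the logarithmic bound
  have hlog : (N : ℝ) / 8 - Real.log 2 ≤ Real.log S.card := by
    have h1 : Real.log ((2:ℝ) ^ N / (2 * c)) ≤ Real.log S.card :=
      Real.log_le_log hlbpos hlb
    have h2 : Real.log ((2:ℝ) ^ N / (2 * c))
        = N * Real.log 2 - (Real.log 2 + ((N:ℝ)/4) * Real.log 3
            + N * (Real.log 4 - Real.log 3)) := by
      rw [Real.log_div (by positivity) (by positivity), Real.log_pow,
        Real.log_mul (by norm_num) (by positivity), hc,
        Real.log_mul (by positivity) (by positivity), Real.log_rpow (by norm_num),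
        Real.log_pow, Real.log_div (by norm_num) (by norm_num)]
      push_cast
      ring
    have h4 : Real.log 4 = 2 * Real.log 2 := by
      rw [show (4:ℝ) = 2^2 by norm_num, Real.log_pow]
      push_cast; ring
    have hkey := vg_key
    have hN1 : (1:ℝ) ≤ N := by exact_mod_cast hN
    have : (N : ℝ) / 8 - Real.log 2 ≤ Real.log ((2:ℝ) ^ N / (2 * c)) := by
      rw [h2, h4]
      nlinarith
    linarith
  -- build the family
  refine ⟨S.card, fun j => (S.equivFin.symm j : Fin N → Bool), hlog, ?_⟩
  intro j k hjk
  have hmemj : ((S.equivFin.symm j : { x // x ∈ S }) : Fin N → Bool) ∈ S :=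
    (S.equivFin.symm j).2
  have hmemk : ((S.equivFin.symm k : { x // x ∈ S }) : Fin N → Bool) ∈ S :=
    (S.equivFin.symm k).2
  have hne' : ((S.equivFin.symm j : { x // x ∈ S }) : Fin N → Bool)
      ≠ ((S.equivFin.symm k : { x // x ∈ S }) : Fin N → Bool) := by
    intro h
    exact hjk (S.equivFin.symm.injective (Subtype.ext h))
  obtain ⟨hd1, hd2⟩ := hS _ hmemj _ hmemk hne'
  constructor
  · have : (N : ℝ) ≤ 4 * (hammingDist (S.equivFin.symm j : Fin N → Bool)
      (S.equivFin.symm k : Fin N → Bool) : ℝ) := by exact_mod_cast hd1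
    linarith
  · have : 4 * (hammingDist (S.equivFin.symm j : Fin N → Bool)
      (S.equivFin.symm k : Fin N → Bool) : ℝ) ≤ 3 * N := by exact_mod_cast hd2
    linarith
end

section
/- Tensorization of the chi-square divergence: for probability measures μ and ν on a measurable space with ν absolutely continuous with respect to μ, the chi-square divergence of the n-fold product measures satisfies d_{χ²}(ν^{⊗n}, μ^{⊗n}) = (1 + d_{χ²}(ν, μ))^n − 1. In particular, if d_{χ²}(ν, μ) ≤ 1/n then d_{χ²}(ν^{⊗n}, μ^{⊗n}) ≤ e − 1. -/
open MeasureTheory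
open scoped ENNReal

/-- The chi-square divergence `d_{χ²}(ν, μ) = ∫ ((dν/dμ) − 1)² dμ`, with values in `[0,∞]`
(the square `((dν/dμ) − 1)²` is computed in `ℝ≥0∞` as `(f−1)² + (1−f)²`, which agrees with
the usual square of the difference). -/
noncomputable def chiSqDiv {Ω : Type*} [MeasurableSpace Ω] (ν μ : Measure Ω) : ℝ≥0∞ :=
  ∫⁻ x, ((ν.rnDeriv μ x - 1) ^ 2 + (1 - ν.rnDeriv μ x) ^ 2) ∂μ

open scoped NNReal in
lemma chiSq_pointwise (a : ℝ≥0∞) :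
    (a - 1) ^ 2 + (1 - a) ^ 2 + 2 * a = a ^ 2 + 1 := by
  rcases eq_or_ne a ⊤ with rfl | ha
  · have h1 : (⊤ : ℝ≥0∞) - 1 = ⊤ := ENNReal.top_sub ENNReal.one_ne_top
    rw [h1]
    simp [pow_two]
  lift a to ℝ≥0 using ha
  rcases le_total a 1 with h | h
  · have h1 : (a : ℝ≥0∞) - 1 = 0 := tsub_eq_zero_of_le (by exact_mod_cast h)
    rw [h1]
    rw [show ((1 : ℝ≥0∞) - a) = ((1 - a : ℝ≥0) : ℝ≥0∞) by
      rw [ENNReal.coe_sub]; simp]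
    norm_cast
    refine NNReal.coe_injective ?_
    push_cast [NNReal.coe_sub h]
    ring
  · have h1 : (1 : ℝ≥0∞) - a = 0 := tsub_eq_zero_of_le (by exact_mod_cast h)
    rw [h1]
    rw [show ((a : ℝ≥0∞) - 1) = ((a - 1 : ℝ≥0) : ℝ≥0∞) by
      rw [ENNReal.coe_sub]; simp]
    norm_cast
    refine NNReal.coe_injective ?_
    push_cast [NNReal.coe_sub h]
    ring

/-- `1 + d_{χ²}(ν,μ) = ∫ (dν/dμ)² dμ` for probability measures with `ν ≪ μ`. -/
lemma chiSqDiv_add_one {Ω : Type*} [MeasurableSpace Ω] (μ ν : Measure Ω)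
    [IsProbabilityMeasure μ] [IsProbabilityMeasure ν] (hac : ν ≪ μ) :
    chiSqDiv ν μ + 1 = ∫⁻ x, (ν.rnDeriv μ x) ^ 2 ∂μ := by
  set f := ν.rnDeriv μ with hf
  have hfm : Measurable f := Measure.measurable_rnDeriv ν μ
  have h1 : ∫⁻ x, f x ∂μ = 1 := by
    rw [Measure.lintegral_rnDeriv hac]; simp
  have key : chiSqDiv ν μ + 2 * 1 = (∫⁻ x, f x ^ 2 ∂μ) + 1 := by
    calc chiSqDiv ν μ + 2 * 1
        = (∫⁻ x, ((f x - 1) ^ 2 + (1 - f x) ^ 2) ∂μ) + ∫⁻ x, 2 * f x ∂μ := by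
          rw [chiSqDiv, ← hf, lintegral_const_mul 2 hfm, h1]
      _ = ∫⁻ x, ((f x - 1) ^ 2 + (1 - f x) ^ 2 + 2 * f x) ∂μ := by
          rw [← lintegral_add_left (by fun_prop)]
      _ = ∫⁻ x, (f x ^ 2 + 1) ∂μ := by
          simp_rw [chiSq_pointwise]
      _ = (∫⁻ x, f x ^ 2 ∂μ) + 1 := by
          rw [lintegral_add_right _ measurable_const, lintegral_const]
          simp
  have : chiSqDiv ν μ + 1 + 1 = (∫⁻ x, f x ^ 2 ∂μ) + 1 := by
    rw [← key]; ring
  exact (ENNReal.add_left_inj ENNReal.one_ne_top).mp this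

/-- Lintegral of a product of coordinate functions over a finite product measure. -/
lemma lintegral_pi_prod {Ω : Type*} [MeasurableSpace Ω] (μ : Measure Ω) [SigmaFinite μ] :
    ∀ (n : ℕ) (f : Fin n → Ω → ℝ≥0∞), (∀ i, Measurable (f i)) →
      ∫⁻ x, ∏ i, f i (x i) ∂(Measure.pi fun _ : Fin n => μ) = ∏ i, ∫⁻ x, f i x ∂μ := by
  intro n
  induction n with
  | zero =>
    intro f hf
    simp [lintegral_const]
  | succ n ih =>
    intro f hf
    have h := (measurePreserving_piFinSuccAbove (fun _ : Fin (n + 1) => μ) 0)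
    have hFm : Measurable (fun p : Ω × (Fin n → Ω) => f 0 p.1 * ∏ i, f (Fin.succ i) (p.2 i)) := by
      apply Measurable.mul
      · exact (hf 0).comp measurable_fst
      · exact Finset.measurable_prod _ fun i _ =>
          ((hf _).comp ((measurable_pi_apply i).comp measurable_snd))
    have heq : ∀ x : Fin (n + 1) → Ω,
        (fun p : Ω × (Fin n → Ω) => f 0 p.1 * ∏ i, f (Fin.succ i) (p.2 i))
          (MeasurableEquiv.piFinSuccAbove (fun _ => Ω) 0 x) = ∏ i, f i (x i) := by
      intro x
      rw [Fin.prod_univ_succ]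
      simp [MeasurableEquiv.piFinSuccAbove, Fin.insertNthEquiv, Fin.zero_succAbove, Fin.tail]
    calc ∫⁻ x, ∏ i, f i (x i) ∂(Measure.pi fun _ : Fin (n + 1) => μ)
        = ∫⁻ x, (fun p : Ω × (Fin n → Ω) => f 0 p.1 * ∏ i, f (Fin.succ i) (p.2 i))
            (MeasurableEquiv.piFinSuccAbove (fun _ => Ω) 0 x)
            ∂(Measure.pi fun _ : Fin (n + 1) => μ) := by
          exact lintegral_congr fun x => (heq x).symm
      _ = ∫⁻ p, f 0 p.1 * ∏ i, f (Fin.succ i) (p.2 i)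
            ∂(μ.prod (Measure.pi fun _ : Fin n => μ)) := h.lintegral_comp hFm
      _ = (∫⁻ x, f 0 x ∂μ) * ∫⁻ y, ∏ i, f (Fin.succ i) (y i)
            ∂(Measure.pi fun _ : Fin n => μ) := by
          exact lintegral_prod_mul (hf 0).aemeasurable
            (Finset.measurable_prod _ fun i _ =>
              (hf _).comp (measurable_pi_apply i)).aemeasurable
      _ = ∏ i, ∫⁻ x, f i x ∂μ := by
          rw [ih _ fun i => hf _, Fin.prod_univ_succ]

lemma withDensity_pi_prod {Ω : Type*} [MeasurableSpace Ω] (μ : Measure Ω)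
    [IsProbabilityMeasure μ] {f : Ω → ℝ≥0∞} (hf : Measurable f)
    (hfin : μ.withDensity f Set.univ ≠ ⊤) (n : ℕ) :
    (Measure.pi fun _ : Fin n => μ).withDensity (fun x => ∏ i, f (x i)) =
      Measure.pi fun _ : Fin n => μ.withDensity f := by
  have hFm : Measurable fun x : Fin n → Ω => ∏ i, f (x i) :=
    Finset.measurable_prod _ fun i _ => hf.comp (measurable_pi_apply i)
  haveI : IsFiniteMeasure (μ.withDensity f) := ⟨hfin.lt_top⟩
  refine (Measure.pi_eq fun s hs => ?_).symm
  rw [withDensity_apply _ (MeasurableSet.univ_pi hs)]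
  have hind : ∀ x : Fin n → Ω,
      (Set.pi Set.univ s).indicator (fun x => ∏ i, f (x i)) x =
        ∏ i, (s i).indicator f (x i) := by
    intro x
    by_cases hx : x ∈ Set.pi Set.univ s
    · rw [Set.indicator_of_mem hx]
      refine Finset.prod_congr rfl fun i _ => ?_
      rw [Set.indicator_of_mem (hx i (Set.mem_univ i))]
    · rw [Set.indicator_of_notMem hx]
      rw [Set.mem_univ_pi] at hx
      push_neg at hx
      obtain ⟨i, hi⟩ := hx
      exact (Finset.prod_eq_zero (Finset.mem_univ i)
        (Set.indicator_of_notMem hi f)).symm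
  calc ∫⁻ x in Set.pi Set.univ s, ∏ i, f (x i) ∂(Measure.pi fun _ : Fin n => μ)
      = ∫⁻ x, (Set.pi Set.univ s).indicator (fun x => ∏ i, f (x i)) x
          ∂(Measure.pi fun _ : Fin n => μ) := by
        rw [lintegral_indicator (MeasurableSet.univ_pi hs)]
    _ = ∫⁻ x, ∏ i, (s i).indicator f (x i) ∂(Measure.pi fun _ : Fin n => μ) :=
        lintegral_congr hind
    _ = ∏ i, ∫⁻ x, (s i).indicator f x ∂μ :=
        lintegral_pi_prod μ n _ fun i => hf.indicator (hs i)
    _ = ∏ i : Fin n, (μ.withDensity f) (s i) := by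
        refine Finset.prod_congr rfl fun i _ => ?_
        rw [lintegral_indicator (hs i), ← withDensity_apply _ (hs i)]

/-- Tensorization of the chi-square divergence: for probability measures `ν ≪ μ`,
`d_{χ²}(ν^{⊗n}, μ^{⊗n}) = (1 + d_{χ²}(ν, μ))^n − 1`; in particular, if
`d_{χ²}(ν, μ) ≤ 1/n` then `d_{χ²}(ν^{⊗n}, μ^{⊗n}) ≤ e − 1`. -/
theorem chiSq_tensorization {Ω : Type*} [MeasurableSpace Ω]
    (μ ν : Measure Ω) [IsProbabilityMeasure μ] [IsProbabilityMeasure ν]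
    (hac : ν ≪ μ) (n : ℕ) :
    chiSqDiv (Measure.pi fun _ : Fin n => ν) (Measure.pi fun _ : Fin n => μ) =
      (1 + chiSqDiv ν μ) ^ n - 1 ∧
    (chiSqDiv ν μ ≤ 1 / (n : ℝ≥0∞) →
      chiSqDiv (Measure.pi fun _ : Fin n => ν) (Measure.pi fun _ : Fin n => μ) ≤
        ENNReal.ofReal (Real.exp 1 - 1)) := by
  set f := ν.rnDeriv μ with hf
  have hfm : Measurable f := Measure.measurable_rnDeriv ν μ
  have hFm : Measurable fun x : Fin n → Ω => ∏ i, f (x i) :=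
    Finset.measurable_prod _ fun i _ => hfm.comp (measurable_pi_apply i)
  have hwd : (Measure.pi fun _ : Fin n => μ).withDensity (fun x => ∏ i, f (x i)) =
      Measure.pi fun _ : Fin n => ν := by
    rw [withDensity_pi_prod μ hfm (by rw [Measure.withDensity_rnDeriv_eq ν μ hac]; simp) n, Measure.withDensity_rnDeriv_eq ν μ hac]
  have hacn : (Measure.pi fun _ : Fin n => ν) ≪ (Measure.pi fun _ : Fin n => μ) := by
    rw [← hwd]; exact withDensity_absolutelyContinuous _ _
  have hrd : (Measure.pi fun _ : Fin n => ν).rnDeriv (Measure.pi fun _ : Fin n => μ)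
      =ᵐ[Measure.pi fun _ : Fin n => μ] fun x => ∏ i, f (x i) := by
    rw [← hwd]
    exact Measure.rnDeriv_withDensity _ hFm
  have hkey : chiSqDiv (Measure.pi fun _ : Fin n => ν) (Measure.pi fun _ : Fin n => μ) + 1 =
      (1 + chiSqDiv ν μ) ^ n := by
    rw [chiSqDiv_add_one _ _ hacn]
    calc ∫⁻ x, ((Measure.pi fun _ : Fin n => ν).rnDeriv (Measure.pi fun _ : Fin n => μ) x) ^ 2
            ∂(Measure.pi fun _ : Fin n => μ)
        = ∫⁻ x, (∏ i, f (x i)) ^ 2 ∂(Measure.pi fun _ : Fin n => μ) :=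
          by
            refine lintegral_congr_ae ?_
            filter_upwards [hrd] with x hx
            rw [hx]
      _ = ∫⁻ x, ∏ i, (f (x i)) ^ 2 ∂(Measure.pi fun _ : Fin n => μ) := by
          simp_rw [Finset.prod_pow]
      _ = ∏ _i : Fin n, ∫⁻ x, f x ^ 2 ∂μ :=
          lintegral_pi_prod μ n _ fun i => hfm.pow_const 2
      _ = (∫⁻ x, f x ^ 2 ∂μ) ^ n := by
          rw [Finset.prod_const, Finset.card_univ, Fintype.card_fin]
      _ = (1 + chiSqDiv ν μ) ^ n := by
          rw [← chiSqDiv_add_one μ ν hac, add_comm]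
  have heq : chiSqDiv (Measure.pi fun _ : Fin n => ν) (Measure.pi fun _ : Fin n => μ) =
      (1 + chiSqDiv ν μ) ^ n - 1 :=
    ENNReal.eq_sub_of_add_eq ENNReal.one_ne_top hkey
  refine ⟨heq, fun hle => ?_⟩
  rw [heq]
  rcases Nat.eq_zero_or_pos n with rfl | hn
  · simp
  have hbound : (1 + chiSqDiv ν μ) ^ n ≤ ENNReal.ofReal (Real.exp 1) := by
    have h1n : (1 : ℝ≥0∞) / (n : ℝ≥0∞) = ENNReal.ofReal (1 / (n : ℝ)) := by
      rw [one_div, one_div, ENNReal.ofReal_inv_of_pos (by positivity),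
        ENNReal.ofReal_natCast]
    have h2 : (1 : ℝ≥0∞) + chiSqDiv ν μ ≤ ENNReal.ofReal (1 + 1 / (n : ℝ)) := by
      rw [ENNReal.ofReal_add zero_le_one (by positivity), ENNReal.ofReal_one]
      exact add_le_add le_rfl (hle.trans h1n.le)
    calc (1 + chiSqDiv ν μ) ^ n ≤ (ENNReal.ofReal (1 + 1 / (n : ℝ))) ^ n :=
          pow_le_pow_left' h2 n
      _ = ENNReal.ofReal ((1 + 1 / (n : ℝ)) ^ n) := by
          rw [ENNReal.ofReal_pow (by positivity)]
      _ ≤ ENNReal.ofReal (Real.exp 1) := by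
          refine ENNReal.ofReal_le_ofReal ?_
          have h3 : (1 + 1 / (n : ℝ)) ^ n ≤ Real.exp (1 / (n : ℝ)) ^ n := by
            refine pow_le_pow_left₀ (by positivity) ?_ n
            have := Real.add_one_le_exp (1 / (n : ℝ))
            linarith
          refine h3.trans ?_
          rw [← Real.exp_nat_mul]
          rw [show (n : ℝ) * (1 / (n : ℝ)) = 1 by
            field_simp]
  calc (1 + chiSqDiv ν μ) ^ n - 1 ≤ ENNReal.ofReal (Real.exp 1) - 1 :=
        tsub_le_tsub_right hbound 1
    _ = ENNReal.ofReal (Real.exp 1 - 1) := by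
        rw [ENNReal.ofReal_sub _ zero_le_one, ENNReal.ofReal_one]
end

section
/- If probability measures μ₀ and μ₁ on a measurable space satisfy d_{χ²}(μ₁, μ₀) ≤ 1/n, then the total variation distance between their n-fold products satisfies d_TV(μ₁^{⊗n}, μ₀^{⊗n}) ≤ √((e−1)/2). -/
open MeasureTheory
open scoped ENNReal

lemma my_lintegral_pi_prod {Ω : Type*} [MeasurableSpace Ω] (μ : Measure Ω) [SigmaFinite μ]
    : ∀ {n : ℕ} (g : Fin n → Ω → ℝ≥0∞), (∀ i, Measurable (g i)) →
    ∫⁻ x, ∏ i, g i (x i) ∂(Measure.pi fun _ : Fin n => μ) = ∏ i, ∫⁻ y, g i y ∂μ := by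
  intro n
  induction n with
  | zero =>
      intro g hg
      simp [lintegral_const, Measure.pi_univ]
  | succ n ih =>
      intro g hg
      rw [← ((measurePreserving_piFinSuccAbove (fun _ : Fin (n+1) => μ) 0).symm).lintegral_comp_emb
        (MeasurableEquiv.measurableEmbedding _)]
      simp only [MeasurableEquiv.piFinSuccAbove_symm_apply, Fin.insertNthEquiv,
        Fin.insertNth_zero, Equiv.coe_fn_mk, Fin.zero_succAbove, cast_eq, Function.comp_def]
      simp_rw [Fin.prod_univ_succ, Fin.cons_zero, Fin.cons_succ]
      have h2 : Measurable fun x : Fin n → Ω => ∏ j : Fin n, g j.succ (x j) :=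
        Finset.measurable_prod Finset.univ fun (j : Fin n) _ =>
          (hg j.succ).comp (measurable_pi_apply j)
      calc ∫⁻ a : Ω × (Fin n → Ω), g 0 a.1 * ∏ x : Fin n, g x.succ (a.2 x)
            ∂(μ.prod (Measure.pi fun _ : Fin n => μ))
          = (∫⁻ y, g 0 y ∂μ) *
            ∫⁻ x : Fin n → Ω, ∏ j : Fin n, g j.succ (x j) ∂(Measure.pi fun _ : Fin n => μ) :=
            lintegral_prod_mul (hg 0).aemeasurable h2.aemeasurable
        _ = (∫⁻ y, g 0 y ∂μ) * ∏ i : Fin n, ∫⁻ y, g i.succ y ∂μ := by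
            rw [ih (fun j => g j.succ) (fun j => hg j.succ)]

lemma my_sq_add_one (a : ℝ≥0∞) : a ^ 2 + 1 = ((a - 1) ^ 2 + (1 - a) ^ 2) + 2 * a := by
  rcases le_total a 1 with h | h
  · have h0 : a - 1 = 0 := tsub_eq_zero_of_le h
    set c := 1 - a with hc
    have hac : a + c = 1 := add_tsub_cancel_of_le h
    have key : a ^ 2 + c = c ^ 2 + a := by
      calc a ^ 2 + c = a ^ 2 + c * (a + c) := by rw [hac, mul_one]
        _ = a * (a + c) + c ^ 2 := by ring
        _ = c ^ 2 + a := by rw [hac, mul_one, add_comm]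
    rw [h0]
    calc a ^ 2 + 1 = (a ^ 2 + c) + a := by rw [← hac]; ring
      _ = (c ^ 2 + a) + a := by rw [key]
      _ = ((0:ℝ≥0∞) ^ 2 + c ^ 2) + 2 * a := by ring
  · have h0 : (1:ℝ≥0∞) - a = 0 := tsub_eq_zero_of_le h
    obtain ⟨c, rfl⟩ : ∃ c, a = c + 1 := ⟨a - 1, (tsub_add_cancel_of_le h).symm⟩
    rw [h0, ENNReal.add_sub_cancel_right ENNReal.one_ne_top]
    ring

/-- If probability measures `μ₀, μ₁` with `μ₁ ≪ μ₀` satisfy `d_{χ²}(μ₁, μ₀) ≤ 1/n`, then the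
total variation distance between their `n`-fold products is at most `√((e−1)/2)`:
for every measurable set `s`, `|μ₁^{⊗n}(s) − μ₀^{⊗n}(s)| ≤ √((e−1)/2)`. -/
theorem tv_product_bound_from_chiSq {Ω : Type*} [MeasurableSpace Ω] (μ₀ μ₁ : Measure Ω)
    [IsProbabilityMeasure μ₀] [IsProbabilityMeasure μ₁] (hac : μ₁ ≪ μ₀) (n : ℕ)
    (hχ : chiSqDiv μ₁ μ₀ ≤ 1 / (n : ℝ≥0∞))
    (s : Set (Fin n → Ω)) (hs : MeasurableSet s) :
    |((Measure.pi fun _ : Fin n => μ₁) s).toReal -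
        ((Measure.pi fun _ : Fin n => μ₀) s).toReal| ≤
      Real.sqrt ((Real.exp 1 - 1) / 2) := by
  classical
  set f := μ₁.rnDeriv μ₀ with hfdef
  have hfm : Measurable f := Measure.measurable_rnDeriv μ₁ μ₀
  have hf1 : ∫⁻ y, f y ∂μ₀ = 1 := by
    rw [Measure.lintegral_rnDeriv hac]; exact measure_univ
  set P : Measure (Fin n → Ω) := Measure.pi fun _ => μ₀ with hPdef
  haveI : IsProbabilityMeasure P := by rw [hPdef]; infer_instance
  set F : (Fin n → Ω) → ℝ≥0∞ := fun x => ∏ i, f (x i) with hFdef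
  have hFm : Measurable F := Finset.measurable_prod _ fun i _ => hfm.comp (measurable_pi_apply i)
  -- the product measure of μ₁ is P with density F
  have hpi : (Measure.pi fun _ : Fin n => μ₁) = P.withDensity F := by
    refine Measure.pi_eq fun t ht => ?_
    rw [withDensity_apply _ (MeasurableSet.univ_pi ht), ← lintegral_indicator
      (MeasurableSet.univ_pi ht)]
    have hind : ∀ x, (Set.univ.pi t).indicator F x = ∏ i, (t i).indicator f (x i) := by
      intro x
      by_cases hx : x ∈ Set.univ.pi t
      · rw [Set.indicator_of_mem hx]
        exact Finset.prod_congr rfl fun i _ => (Set.indicator_of_mem (hx i trivial) f).symm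
      · rw [Set.indicator_of_notMem hx]
        simp only [Set.mem_univ_pi, not_forall] at hx
        obtain ⟨i, hi⟩ := hx
        exact (Finset.prod_eq_zero (Finset.mem_univ i) (Set.indicator_of_notMem hi f)).symm
    rw [lintegral_congr hind,
      my_lintegral_pi_prod μ₀ (fun i => (t i).indicator f) (fun i => hfm.indicator (ht i))]
    refine Finset.prod_congr rfl fun i _ => ?_
    rw [lintegral_indicator (ht i), Measure.setLIntegral_rnDeriv hac]
  -- ∫ F = 1
  have hFint : ∫⁻ x, F x ∂P = 1 := by
    rw [hPdef, my_lintegral_pi_prod μ₀ (fun _ => f) (fun _ => hfm)]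
    simp [hf1]
  -- ∫ F² = (∫ f²)^n
  have hFsq : ∫⁻ x, F x ^ 2 ∂P = (∫⁻ y, f y ^ 2 ∂μ₀) ^ n := by
    have hx : ∀ x, F x ^ 2 = ∏ i, (f (x i)) ^ 2 := fun x => by
      rw [hFdef]; exact (Finset.prod_pow _ _ _).symm
    simp_rw [hx]
    rw [hPdef, my_lintegral_pi_prod μ₀ (fun _ => fun y => f y ^ 2)
      (fun _ => hfm.pow_const 2)]
    simp
  -- ∫ f² + 1 = χ² + 2
  have hchisq : (∫⁻ y, f y ^ 2 ∂μ₀) + 1 = chiSqDiv μ₁ μ₀ + 2 := by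
    have h1 : (∫⁻ y, f y ^ 2 ∂μ₀) + 1 = ∫⁻ y, (f y ^ 2 + 1) ∂μ₀ := by
      rw [lintegral_add_right _ measurable_const, lintegral_one, measure_univ]
    have h2 : ∫⁻ y, (f y ^ 2 + 1) ∂μ₀
        = ∫⁻ y, (((f y - 1) ^ 2 + (1 - f y) ^ 2) + 2 * f y) ∂μ₀ := by
      exact lintegral_congr fun y => my_sq_add_one (f y)
    have h3 : ∫⁻ y, (((f y - 1) ^ 2 + (1 - f y) ^ 2) + 2 * f y) ∂μ₀
        = chiSqDiv μ₁ μ₀ + 2 := by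
      rw [lintegral_add_right _ (hfm.const_mul 2), lintegral_const_mul 2 hfm, hf1,
        mul_one]
      rfl
    rw [h1, h2, h3]
  -- ∫ F² ≤ e
  have hE : ∫⁻ x, F x ^ 2 ∂P ≤ ENNReal.ofReal (Real.exp 1) := by
    rw [hFsq]
    rcases Nat.eq_zero_or_pos n with hn | hn
    · subst hn
      simpa using ENNReal.one_le_ofReal.mpr (Real.one_le_exp zero_le_one)
    · have hnR : (0:ℝ) < n := by exact_mod_cast hn
      have hf2le : (∫⁻ y, f y ^ 2 ∂μ₀) ≤ 1 + 1 / (n : ℝ≥0∞) := by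
        have := hchisq.le.trans (add_le_add_left hχ 2)
        have h' : (∫⁻ y, f y ^ 2 ∂μ₀) + 1 ≤ (1 + 1 / (n : ℝ≥0∞)) + 1 := by
          calc (∫⁻ y, f y ^ 2 ∂μ₀) + 1 ≤ 1 / (n : ℝ≥0∞) + 2 := this
            _ = (1 + 1 / (n : ℝ≥0∞)) + 1 := by ring
        exact (ENNReal.add_le_add_iff_right ENNReal.one_ne_top).mp h'
      have hcoe : (1 + 1 / (n : ℝ≥0∞)) = ENNReal.ofReal (1 + 1 / (n:ℝ)) := by
        rw [ENNReal.ofReal_add zero_le_one (by positivity), ENNReal.ofReal_one,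
          ENNReal.ofReal_div_of_pos hnR, ENNReal.ofReal_one, ENNReal.ofReal_natCast]
      calc (∫⁻ y, f y ^ 2 ∂μ₀) ^ n ≤ (1 + 1 / (n : ℝ≥0∞)) ^ n :=
            pow_le_pow_left' hf2le n
        _ = ENNReal.ofReal ((1 + 1 / (n:ℝ)) ^ n) := by
            rw [hcoe, ← ENNReal.ofReal_pow (by positivity)]
        _ ≤ ENNReal.ofReal (Real.exp 1) := by
            refine ENNReal.ofReal_le_ofReal ?_
            have h1 : (1 + 1 / (n:ℝ)) ≤ Real.exp (1 / n) := by
              have := Real.add_one_le_exp (1 / (n:ℝ))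
              linarith
            calc (1 + 1 / (n:ℝ)) ^ n ≤ Real.exp (1 / n) ^ n :=
                  pow_le_pow_left₀ (by positivity) h1 n
              _ = Real.exp 1 := by
                  rw [← Real.exp_nat_mul, mul_one_div, div_self (ne_of_gt hnR)]
  -- pieces D1, D2
  set D1 : (Fin n → Ω) → ℝ≥0∞ := fun x => F x - 1 with hD1def
  set D2 : (Fin n → Ω) → ℝ≥0∞ := fun x => 1 - F x with hD2def
  have hD1m : Measurable D1 := hFm.sub measurable_const
  have hD2m : Measurable D2 := measurable_const.sub hFm
  set E1 : ℝ≥0∞ := ENNReal.ofReal (Real.exp 1 - 1) with hE1def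
  -- ∫ (D1² + D2²) ≤ E1
  have hS : ∫⁻ x, (D1 x ^ 2 + D2 x ^ 2) ∂P ≤ E1 := by
    have hid : (∫⁻ x, F x ^ 2 ∂P) + 1 = (∫⁻ x, (D1 x ^ 2 + D2 x ^ 2) ∂P) + 2 := by
      have h1 : (∫⁻ x, F x ^ 2 ∂P) + 1 = ∫⁻ x, (F x ^ 2 + 1) ∂P := by
        rw [lintegral_add_right _ measurable_const, lintegral_one, measure_univ]
      have h2 : ∫⁻ x, (F x ^ 2 + 1) ∂P
          = ∫⁻ x, ((D1 x ^ 2 + D2 x ^ 2) + 2 * F x) ∂P :=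
        lintegral_congr fun x => my_sq_add_one (F x)
      rw [h1, h2, lintegral_add_right _ (hFm.const_mul 2), lintegral_const_mul 2 hFm,
        hFint, mul_one]
    have h' : (∫⁻ x, (D1 x ^ 2 + D2 x ^ 2) ∂P) + 2 ≤ E1 + 2 := by
      rw [← hid]
      calc (∫⁻ x, F x ^ 2 ∂P) + 1 ≤ ENNReal.ofReal (Real.exp 1) + 1 := add_le_add_left hE 1
        _ = E1 + 2 := by
          rw [hE1def]
          rw [show (2:ℝ≥0∞) = 1 + 1 by norm_num, ← add_assoc]
          congr 1
          rw [← ENNReal.ofReal_one, ← ENNReal.ofReal_add (by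
            have := Real.one_le_exp (zero_le_one (α := ℝ)); linarith) zero_le_one]
          congr 1
          ring
    exact (ENNReal.add_le_add_iff_right ENNReal.ofNat_ne_top).mp h'
  -- Cauchy-Schwarz : ∫ (D1 + D2) ≤ E1 ^ (1/2)
  set G : (Fin n → Ω) → ℝ≥0∞ := fun x => D1 x + D2 x with hGdef
  have hGm : Measurable G := hD1m.add hD2m
  have hGsq : ∀ x, G x ^ 2 = D1 x ^ 2 + D2 x ^ 2 := by
    intro x
    rcases le_total (F x) 1 with h | h
    · have : D1 x = 0 := tsub_eq_zero_of_le h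
      simp [hGdef, this]
    · have : D2 x = 0 := tsub_eq_zero_of_le h
      simp [hGdef, this]
  have hCS : ∫⁻ x, G x ∂P ≤ E1 ^ ((1:ℝ)/2) := by
    have hconj : Real.HolderConjugate 2 2 := Real.HolderConjugate.two_two
    have := ENNReal.lintegral_mul_le_Lp_mul_Lq P hconj hGm.aemeasurable
      (aemeasurable_const (b := (1:ℝ≥0∞)))
    simp only [Pi.mul_apply, mul_one, ENNReal.one_rpow, lintegral_one, measure_univ,
      ENNReal.one_rpow, mul_one] at this
    calc ∫⁻ x, G x ∂P ≤ (∫⁻ x, G x ^ (2:ℝ) ∂P) ^ ((1:ℝ)/2) := by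
          simpa using this
      _ = (∫⁻ x, (D1 x ^ 2 + D2 x ^ 2) ∂P) ^ ((1:ℝ)/2) := by
          congr 1
          refine lintegral_congr fun x => ?_
          rw [← hGsq x, ← ENNReal.rpow_natCast (G x) 2]
          norm_num
      _ ≤ E1 ^ ((1:ℝ)/2) := ENNReal.rpow_le_rpow hS (by norm_num)
  -- A = B and 2A ≤ E1^(1/2)
  have hAB : ∫⁻ x, D1 x ∂P = ∫⁻ x, D2 x ∂P := by
    set C : (Fin n → Ω) → ℝ≥0∞ := fun x => min (F x) 1 with hCdef
    have hCm : Measurable C := hFm.min measurable_const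
    have h1 : ∫⁻ x, D1 x ∂P + ∫⁻ x, C x ∂P = 1 := by
      rw [← lintegral_add_right _ hCm]
      rw [show ∫⁻ x, (D1 x + C x) ∂P = ∫⁻ x, F x ∂P from lintegral_congr fun x => ?_, hFint]
      rcases le_total (F x) 1 with h | h
      · simp [hD1def, tsub_eq_zero_of_le h, hCdef, min_eq_left h]
      · simp only [hD1def, hCdef, min_eq_right h]
        exact tsub_add_cancel_of_le h
    have h2 : ∫⁻ x, D2 x ∂P + ∫⁻ x, C x ∂P = 1 := by
      rw [← lintegral_add_right _ hCm]
      rw [show ∫⁻ x, (D2 x + C x) ∂P = ∫⁻ x, (1:ℝ≥0∞) ∂P from lintegral_congr fun x => ?_]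
      · rw [lintegral_one, measure_univ]
      rcases le_total (F x) 1 with h | h
      · simp only [hD2def, hCdef, min_eq_left h]
        exact tsub_add_cancel_of_le h
      · simp [hD2def, tsub_eq_zero_of_le h, hCdef, min_eq_right h]
    have hCfin : ∫⁻ x, C x ∂P ≠ ∞ := by
      refine ne_of_lt (lt_of_le_of_lt ?_ ENNReal.one_lt_top)
      calc ∫⁻ x, C x ∂P ≤ ∫⁻ _, (1:ℝ≥0∞) ∂P := lintegral_mono fun x => min_le_right _ _
        _ = 1 := by rw [lintegral_one, measure_univ]
    exact (ENNReal.add_left_inj hCfin).mp (h1.trans h2.symm)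
  have hA1 : ∫⁻ x, D1 x ∂P ≤ 1 := by
    calc ∫⁻ x, D1 x ∂P ≤ ∫⁻ x, F x ∂P := lintegral_mono fun x => tsub_le_self
      _ = 1 := hFint
  have h2A : 2 * ∫⁻ x, D1 x ∂P ≤ E1 ^ ((1:ℝ)/2) := by
    calc 2 * ∫⁻ x, D1 x ∂P = ∫⁻ x, D1 x ∂P + ∫⁻ x, D2 x ∂P := by rw [two_mul, hAB]
      _ = ∫⁻ x, G x ∂P := (lintegral_add_left hD1m _).symm
      _ ≤ E1 ^ ((1:ℝ)/2) := hCS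
  -- one-sided bounds on measures
  have hμ₁s : (Measure.pi fun _ : Fin n => μ₁) s = ∫⁻ x in s, F x ∂P := by
    rw [hpi, withDensity_apply _ hs]
  have hside1 : (Measure.pi fun _ : Fin n => μ₁) s ≤ P s + ∫⁻ x, D1 x ∂P := by
    rw [hμ₁s]
    calc ∫⁻ x in s, F x ∂P ≤ ∫⁻ x in s, (1 + D1 x) ∂P := by
          refine setLIntegral_mono (measurable_const.add hD1m) fun x _ => ?_
          rw [add_comm]
          exact le_tsub_add
      _ = ∫⁻ x in s, (1:ℝ≥0∞) ∂P + ∫⁻ x in s, D1 x ∂P :=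
          lintegral_add_right _ hD1m
      _ ≤ P s + ∫⁻ x, D1 x ∂P := by
          gcongr
          · rw [setLIntegral_one]
          · exact Measure.restrict_le_self
  have hside2 : P s ≤ (Measure.pi fun _ : Fin n => μ₁) s + ∫⁻ x, D1 x ∂P := by
    rw [hμ₁s, hAB]
    calc P s = ∫⁻ x in s, (1:ℝ≥0∞) ∂P := (setLIntegral_one _).symm
      _ ≤ ∫⁻ x in s, (F x + D2 x) ∂P := by
          refine setLIntegral_mono (hFm.add hD2m) fun x _ => ?_
          rw [add_comm]
          exact le_tsub_add
      _ = ∫⁻ x in s, F x ∂P + ∫⁻ x in s, D2 x ∂P := lintegral_add_right _ hD2m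
      _ ≤ ∫⁻ x in s, F x ∂P + ∫⁻ x, D2 x ∂P := by
          gcongr
          exact Measure.restrict_le_self
  -- pass to reals
  haveI : IsProbabilityMeasure (Measure.pi fun _ : Fin n => μ₁) := by infer_instance
  have hAfin : ∫⁻ x, D1 x ∂P ≠ ∞ := ne_of_lt (lt_of_le_of_lt hA1 ENNReal.one_lt_top)
  have hμ₁fin : (Measure.pi fun _ : Fin n => μ₁) s ≠ ∞ := measure_ne_top _ _
  have hPfin : P s ≠ ∞ := measure_ne_top _ _
  set Ar := (∫⁻ x, D1 x ∂P).toReal with hArdef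
  have habs : |((Measure.pi fun _ : Fin n => μ₁) s).toReal - (P s).toReal| ≤ Ar := by
    rw [abs_sub_le_iff]
    constructor
    · have := ENNReal.toReal_mono (by finiteness) hside1
      rw [ENNReal.toReal_add hPfin hAfin] at this
      linarith
    · have := ENNReal.toReal_mono (by finiteness) hside2
      rw [ENNReal.toReal_add hμ₁fin hAfin] at this
      linarith
  -- numeric conclusion
  have hexp1 : (0:ℝ) ≤ Real.exp 1 - 1 := by
    have := Real.one_le_exp (zero_le_one (α := ℝ)); linarith
  have hArle : Ar ≤ Real.sqrt (Real.exp 1 - 1) / 2 := by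
    have hE1top : E1 ^ ((1:ℝ)/2) ≠ ∞ :=
      ENNReal.rpow_ne_top_of_nonneg (by norm_num) ENNReal.ofReal_ne_top
    have h2' : ((2:ℝ≥0∞) * ∫⁻ x, D1 x ∂P).toReal ≤ (E1 ^ ((1:ℝ)/2)).toReal :=
      ENNReal.toReal_mono hE1top h2A
    rw [ENNReal.toReal_mul, ENNReal.toReal_ofNat] at h2'
    have hrhs : (E1 ^ ((1:ℝ)/2)).toReal = Real.sqrt (Real.exp 1 - 1) := by
      rw [hE1def, ← ENNReal.toReal_rpow, ENNReal.toReal_ofReal hexp1,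
        Real.sqrt_eq_rpow]
    rw [hrhs] at h2'
    linarith
  refine habs.trans (hArle.trans ?_)
  have h4 : Real.sqrt (Real.exp 1 - 1) / 2 = Real.sqrt ((Real.exp 1 - 1) / 4) := by
    rw [show (4:ℝ) = 2^2 by norm_num, ← Real.sqrt_sq (by norm_num : (0:ℝ) ≤ 2)]
    rw [← Real.sqrt_div hexp1]
    norm_num
  rw [h4]
  exact Real.sqrt_le_sqrt (by linarith)
end

section
/- Support discrepancy is controlled by the adversarial loss: let γ ∈ (0,1], and let μ, ν be probability measures on ℝ^D with supports contained in a ball of radius R. Then E_μ[dist(X, supp ν)^γ] + E_ν[dist(X, supp μ)^γ] ≤ c^{−1} · d_γ(μ, ν), where c > 0 is a constant depending only on γ and R, and d_γ is the adversarial loss over the unit ball of the γ-Hölder class C₁^γ(ℝ^D). -/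
open MeasureTheory
open scoped ENNReal

/-- The support of a measure on a topological space: the set of points all of whose
neighbourhoods have positive measure (the complement of the largest open null set). -/
def measSupport {Ω : Type*} [TopologicalSpace Ω] [MeasurableSpace Ω] (μ : Measure Ω) :
    Set Ω :=
  {x | ∀ U ∈ nhds x, μ U ≠ 0}

open Metric

lemma measure_compl_measSupport {Ω : Type*} [TopologicalSpace Ω]
    [SecondCountableTopology Ω] [MeasurableSpace Ω] (μ : Measure Ω) :
    μ (measSupport μ)ᶜ = 0 := by
  set S : Set (Set Ω) := {U | IsOpen U ∧ μ U = 0} with hS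
  obtain ⟨T, hTS, hTc, hTU⟩ :=
    TopologicalSpace.isOpen_sUnion_countable S (fun s hs => hs.1)
  have h0 : μ (⋃₀ S) = 0 := by
    rw [← hTU]
    exact (measure_sUnion_null_iff hTS).2 fun s hs => (hTc hs).2
  refine measure_mono_null ?_ h0
  intro x hx
  simp only [measSupport, Set.mem_compl_iff, Set.mem_setOf_eq, not_forall] at hx
  obtain ⟨U, hU, hU0⟩ := hx
  push_neg at hU0
  exact ⟨interior U, ⟨isOpen_interior,
    measure_mono_null interior_subset hU0⟩, mem_interior_iff_mem_nhds.2 hU⟩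

lemma rpow_holder {γ : ℝ} (hγ0 : 0 ≤ γ) (hγ1 : γ ≤ 1) {a b : ℝ} (ha : 0 ≤ a) (hb : 0 ≤ b) :
    |a ^ γ - b ^ γ| ≤ |a - b| ^ γ := by
  wlog hab : b ≤ a generalizing a b
  · rw [abs_sub_comm, abs_sub_comm a b]; exact this hb ha (le_of_not_ge hab)
  have h1 : a ^ γ ≤ (a - b) ^ γ + b ^ γ := by
    have := NNReal.rpow_add_le_add_rpow (a - b).toNNReal b.toNNReal hγ0 hγ1
    have hadd : ((a - b).toNNReal + b.toNNReal : NNReal) = a.toNNReal := by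
      ext; rw [NNReal.coe_add, Real.coe_toNNReal _ (by linarith : (0:ℝ) ≤ a - b), Real.coe_toNNReal _ hb, Real.coe_toNNReal _ ha]; ring
    rw [hadd] at this
    calc a ^ γ = ((a.toNNReal : ℝ)) ^ γ := by rw [Real.coe_toNNReal _ ha]
      _ = ((a.toNNReal ^ γ : NNReal) : ℝ) := by rw [NNReal.coe_rpow]
      _ ≤ (((a - b).toNNReal ^ γ + b.toNNReal ^ γ : NNReal) : ℝ) := by exact_mod_cast this
      _ = (a - b) ^ γ + b ^ γ := by
          push_cast [NNReal.coe_rpow, Real.coe_toNNReal _ (by linarith : (0:ℝ) ≤ a - b),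
            Real.coe_toNNReal _ hb]
          ring
  have h2 : b ^ γ ≤ a ^ γ := Real.rpow_le_rpow hb hab hγ0
  rw [abs_of_nonneg (by linarith), abs_of_nonneg (by linarith)]
  linarith

/-- Support discrepancy is controlled by the adversarial loss: for `γ ∈ (0,1]` and
probability measures `μ, ν` on `ℝ^D` with supports in a ball of radius `R`,
`E_μ[dist(X, supp ν)^γ] + E_ν[dist(X, supp μ)^γ] ≤ c⁻¹ d_γ(μ, ν)` for a constant
`c > 0` depending only on `γ` and `R` (and the dimension), where `d_γ` is the adversarial
loss over the unit ball of the `γ`-Hölder class. -/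
theorem support_discrepancy_le_advLoss (D : ℕ) (γ R : ℝ)
    (hγ0 : 0 < γ) (hγ1 : γ ≤ 1) (hR : 0 < R) :
    ∃ c > (0 : ℝ), ∀ μ ν : Measure (EuclideanSpace ℝ (Fin D)),
      IsProbabilityMeasure μ → IsProbabilityMeasure ν →
      measSupport μ ⊆ Metric.closedBall 0 R → measSupport ν ⊆ Metric.closedBall 0 R →
      (∫ x, Metric.infDist x (measSupport ν) ^ γ ∂μ) +
          (∫ x, Metric.infDist x (measSupport μ) ^ γ ∂ν) ≤
        c⁻¹ * sSup {r : ℝ | ∃ f : EuclideanSpace ℝ (Fin D) → ℝ,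
          (∀ x, |f x| ≤ 1) ∧ (∀ x y, |f x - f y| ≤ dist x y ^ γ) ∧
          r = (∫ x, f x ∂μ) - ∫ x, f x ∂ν} := by
  set B : ℝ := (2 * R) ^ γ with hBdef
  have hB : 0 < B := Real.rpow_pos_of_pos (by linarith) γ
  set c : ℝ := (2 + 2 * B)⁻¹ with hcdef
  have hc : 0 < c := by positivity
  refine ⟨c, hc, fun μ ν hμP hνP hμR hνR => ?_⟩
  set Sμ := measSupport μ
  set Sν := measSupport ν
  -- g functions
  set g : Set (EuclideanSpace ℝ (Fin D)) → EuclideanSpace ℝ (Fin D) → ℝ :=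
    fun S x => min (infDist x S) (2 * R) ^ γ with hgdef
  have hg_nonneg : ∀ S x, 0 ≤ g S x := fun S x =>
    Real.rpow_nonneg (le_min infDist_nonneg (by linarith)) γ
  have hg_le : ∀ S x, g S x ≤ B :=
    fun S x => Real.rpow_le_rpow (le_min infDist_nonneg (by linarith))
      (min_le_right _ _) hγ0.le
  have hg_holder : ∀ S x y, |g S x - g S y| ≤ dist x y ^ γ := by
    intro S x y
    have h1 : |min (infDist x S) (2 * R) - min (infDist y S) (2 * R)| ≤ dist x y := by
      refine (abs_min_sub_min_le_max _ _ _ _).trans (max_le ?_ (by simp [dist_nonneg]))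
      rw [abs_sub_le_iff]
      constructor
      · linarith [infDist_le_infDist_add_dist (x := x) (y := y) (s := S)]
      · linarith [infDist_le_infDist_add_dist (x := y) (y := x) (s := S), dist_comm x y]
    calc |g S x - g S y|
        ≤ |min (infDist x S) (2 * R) - min (infDist y S) (2 * R)| ^ γ :=
          rpow_holder hγ0.le hγ1 (le_min infDist_nonneg (by linarith))
            (le_min infDist_nonneg (by linarith))
      _ ≤ dist x y ^ γ := Real.rpow_le_rpow (abs_nonneg _) h1 hγ0.le
  have hg_cont : ∀ S : Set (EuclideanSpace ℝ (Fin D)), Continuous (g S) := fun S =>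
    ((continuous_infDist_pt S).min continuous_const).rpow_const (fun x => Or.inr hγ0.le)
  have hg_int : ∀ (S : Set (EuclideanSpace ℝ (Fin D))) (ρ : Measure (EuclideanSpace ℝ (Fin D)))
      [IsProbabilityMeasure ρ], Integrable (g S) ρ := by
    intro S ρ hρ
    exact ⟨(hg_cont S).aestronglyMeasurable,
      HasFiniteIntegral.of_bounded (C := B)
        (Filter.Eventually.of_forall fun x => by
          rw [Real.norm_eq_abs, abs_of_nonneg (hg_nonneg S x)]; exact hg_le S x)⟩
  -- the test function
  set f : EuclideanSpace ℝ (Fin D) → ℝ := fun x => c * g Sν x - c * g Sμ x with hfdef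
  have hf_bdd : ∀ x, |f x| ≤ 1 := by
    intro x
    have h1 := hg_nonneg Sν x; have h2 := hg_nonneg Sμ x
    have h3 := hg_le Sν x; have h4 := hg_le Sμ x
    have hcB : c * B ≤ 1 := by
      rw [hcdef, inv_mul_le_iff₀ (by linarith)]; nlinarith
    have hfx : f x = c * g Sν x - c * g Sμ x := rfl
    rw [abs_le, hfx]
    have k1 := mul_le_mul_of_nonneg_left h4 hc.le
    have k2 := mul_le_mul_of_nonneg_left h3 hc.le
    have k3 := mul_nonneg hc.le h1
    have k4 := mul_nonneg hc.le h2
    constructor <;> linarith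
  have hf_holder : ∀ x y, |f x - f y| ≤ dist x y ^ γ := by
    intro x y
    have h1 := hg_holder Sν x y
    have h2 := hg_holder Sμ x y
    have key : |f x - f y| ≤ c * |g Sν x - g Sν y| + c * |g Sμ x - g Sμ y| := by
      have : f x - f y = c * (g Sν x - g Sν y) - c * (g Sμ x - g Sμ y) := by ring
      rw [this]
      refine (abs_sub _ _).trans ?_
      rw [abs_mul, abs_mul, abs_of_nonneg hc.le]
    have h2c : 2 * c ≤ 1 := by
      rw [hcdef]; rw [mul_inv_le_iff₀ (by linarith)]; nlinarith
    have hd : 0 ≤ dist x y ^ γ := Real.rpow_nonneg dist_nonneg γ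
    nlinarith [abs_nonneg (g Sν x - g Sν y), abs_nonneg (g Sμ x - g Sμ y)]
  -- a.e. facts
  have hμae : ∀ᵐ x ∂μ, x ∈ Sμ := by
    have := measure_compl_measSupport μ
    rw [Filter.eventually_iff, mem_ae_iff]
    simpa using this
  have hνae : ∀ᵐ x ∂ν, x ∈ Sν := by
    have := measure_compl_measSupport ν
    rw [Filter.eventually_iff, mem_ae_iff]
    simpa using this
  have hSν_ne : Sν.Nonempty := by
    rw [Set.nonempty_iff_ne_empty]
    intro h
    have h2 := measure_compl_measSupport ν
    rw [show measSupport ν = Sν from rfl, h, Set.compl_empty] at h2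
    simp [measure_univ] at h2
  have hSμ_ne : Sμ.Nonempty := by
    rw [Set.nonempty_iff_ne_empty]
    intro h
    have h2 := measure_compl_measSupport μ
    rw [show measSupport μ = Sμ from rfl, h, Set.compl_empty] at h2
    simp [measure_univ] at h2
  -- on the support, infDist to the other support is ≤ 2R
  have hkey : ∀ (x : EuclideanSpace ℝ (Fin D)), x ∈ Metric.closedBall 0 R →
      ∀ S : Set (EuclideanSpace ℝ (Fin D)), S.Nonempty → S ⊆ Metric.closedBall 0 R →
      g S x = infDist x S ^ γ := by
    intro x hx S hS hSR
    obtain ⟨y, hy⟩ := hS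
    have hxy : infDist x S ≤ 2 * R := by
      refine (infDist_le_dist_of_mem hy).trans ?_
      have h1 : dist x 0 ≤ R := mem_closedBall.1 hx
      have h2 : dist y 0 ≤ R := mem_closedBall.1 (hSR hy)
      calc dist x y ≤ dist x 0 + dist 0 y := dist_triangle _ _ _
        _ ≤ R + R := by rw [dist_comm 0 y]; exact add_le_add h1 h2
        _ = 2 * R := by ring
    rw [hgdef]; simp only [min_eq_left hxy]
  -- integral identities
  have hμg : ∫ x, infDist x Sν ^ γ ∂μ = ∫ x, g Sν x ∂μ := by
    refine integral_congr_ae ?_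
    filter_upwards [hμae] with x hx
    rw [hkey x (hμR hx) Sν hSν_ne hνR]
  have hνg : ∫ x, infDist x Sμ ^ γ ∂ν = ∫ x, g Sμ x ∂ν := by
    refine integral_congr_ae ?_
    filter_upwards [hνae] with x hx
    rw [hkey x (hνR hx) Sμ hSμ_ne hμR]
  have hμ0 : ∫ x, g Sμ x ∂μ = 0 := by
    refine integral_eq_zero_of_ae ?_
    filter_upwards [hμae] with x hx
    have : infDist x Sμ = 0 := infDist_zero_of_mem hx
    simp only [hgdef, this, Pi.zero_apply]
    rw [min_eq_left (by linarith), Real.zero_rpow hγ0.ne']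
  have hν0 : ∫ x, g Sν x ∂ν = 0 := by
    refine integral_eq_zero_of_ae ?_
    filter_upwards [hνae] with x hx
    have : infDist x Sν = 0 := infDist_zero_of_mem hx
    simp only [hgdef, this, Pi.zero_apply]
    rw [min_eq_left (by linarith), Real.zero_rpow hγ0.ne']
  -- value of ∫ f dμ - ∫ f dν
  have hintμ : ∫ x, f x ∂μ = c * ∫ x, g Sν x ∂μ := by
    rw [hfdef]
    rw [integral_sub ((hg_int Sν μ).const_mul c) ((hg_int Sμ μ).const_mul c),
      integral_const_mul, integral_const_mul, hμ0]
    ring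
  have hintν : ∫ x, f x ∂ν = - (c * ∫ x, g Sμ x ∂ν) := by
    rw [hfdef]
    rw [integral_sub ((hg_int Sν ν).const_mul c) ((hg_int Sμ ν).const_mul c),
      integral_const_mul, integral_const_mul, hν0]
    ring
  set A := {r : ℝ | ∃ f : EuclideanSpace ℝ (Fin D) → ℝ,
      (∀ x, |f x| ≤ 1) ∧ (∀ x y, |f x - f y| ≤ dist x y ^ γ) ∧
      r = (∫ x, f x ∂μ) - ∫ x, f x ∂ν} with hAdef
  have hbdd : BddAbove A := by
    refine ⟨2, fun r hr => ?_⟩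
    obtain ⟨h, hb, _, rfl⟩ := hr
    have e1 : |∫ x, h x ∂μ| ≤ 1 := by
      have := norm_integral_le_of_norm_le_const (μ := μ) (f := h) (C := 1)
        (Filter.Eventually.of_forall fun x => by rw [Real.norm_eq_abs]; exact hb x)
      simpa [measure_univ] using this
    have e2 : |∫ x, h x ∂ν| ≤ 1 := by
      have := norm_integral_le_of_norm_le_const (μ := ν) (f := h) (C := 1)
        (Filter.Eventually.of_forall fun x => by rw [Real.norm_eq_abs]; exact hb x)
      simpa [measure_univ] using this
    have := abs_sub (∫ x, h x ∂μ) (∫ x, h x ∂ν)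
    have := le_abs_self ((∫ x, h x ∂μ) - ∫ x, h x ∂ν)
    linarith
  have hmem : c * ((∫ x, infDist x Sν ^ γ ∂μ) + ∫ x, infDist x Sμ ^ γ ∂ν) ∈ A := by
    refine ⟨f, hf_bdd, hf_holder, ?_⟩
    rw [hintμ, hintν, hμg, hνg]
    ring
  have hle := le_csSup hbdd hmem
  calc (∫ x, infDist x Sν ^ γ ∂μ) + ∫ x, infDist x Sμ ^ γ ∂ν
      = c⁻¹ * (c * ((∫ x, infDist x Sν ^ γ ∂μ) + ∫ x, infDist x Sμ ^ γ ∂ν)) := by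
        field_simp
    _ ≤ c⁻¹ * sSup A := by
        exact mul_le_mul_of_nonneg_left hle (inv_nonneg.2 hc.le)
end

section
/- Kernel density estimator bias bound with vanishing moments: let α > 0, and let k̄: ℝ → ℝ be a bounded, compactly supported kernel with support in [0,1], ∫ k̄(t) dt = 1, and ∫ t^j k̄(t) dt = 0 for all integers 1 ≤ j ≤ ⌈α⌉. Let ν: ℝ^d → ℝ be an α-Hölder function with Hölder norm at most L. Then there exists C depending only on d, α, L, and k̄ such that for all h ∈ (0,1] and all y ∈ ℝ^d, | ∫ h^{−d} ∏_{j=1}^d k̄((z_j − y_j)/h) · ν(z) dz − ν(y) | ≤ C h^α. -/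
open MeasureTheory

namespace KDEAux

lemma line_iteratedDeriv {E : Type*} [NormedAddCommGroup E] [NormedSpace ℝ E]
    {f : E → ℝ} {n : ℕ} (hf : ContDiff ℝ (n : ℕ∞) f) (y v : E) :
    ∀ i ≤ n, ∀ t : ℝ, iteratedDeriv i (fun s : ℝ => f (y + s • v)) t
      = iteratedFDeriv ℝ i f (y + t • v) (fun _ => v) := by
  intro i
  induction i with
  | zero => intro _ t; simp [iteratedDeriv_zero]
  | succ i ih =>
    intro hin t
    have hi : i ≤ n := Nat.le_of_succ_le hin
    have hfd : ∀ s : ℝ, iteratedDeriv i (fun s : ℝ => f (y + s • v)) s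
        = iteratedFDeriv ℝ i f (y + s • v) (fun _ => v) := fun s => ih hi s
    rw [iteratedDeriv_succ]
    have h1 : HasDerivAt (fun s : ℝ => y + s • v) v t := by
      simpa using ((hasDerivAt_id t).smul_const v).const_add y
    have hdiff : DifferentiableAt ℝ (iteratedFDeriv ℝ i f) (y + t • v) :=
      (hf.differentiable_iteratedFDeriv (by exact_mod_cast hin)) (y + t • v)
    have h2 : HasDerivAt (fun s : ℝ => iteratedFDeriv ℝ i f (y + s • v))
        (fderiv ℝ (iteratedFDeriv ℝ i f) (y + t • v) v) t :=
      hdiff.hasFDerivAt.comp_hasDerivAt t h1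
    have h3 : HasDerivAt (fun s : ℝ => iteratedFDeriv ℝ i f (y + s • v) (fun _ => v))
        (fderiv ℝ (iteratedFDeriv ℝ i f) (y + t • v) v (fun _ => v)) t :=
      (ContinuousMultilinearMap.apply ℝ (fun _ : Fin i => E) ℝ
        (fun _ => v)).hasFDerivAt.comp_hasDerivAt t h2
    have h4 : deriv (fun s : ℝ => iteratedFDeriv ℝ i f (y + s • v) (fun _ => v)) t
        = iteratedFDeriv ℝ (i+1) f (y + t • v) (fun _ => v) := by
      rw [h3.deriv, iteratedFDeriv_succ_apply_left]
      rfl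
    rw [funext hfd, h4]

lemma itdw_eq {g : ℝ → ℝ} {n : ℕ} (hg : ContDiff ℝ (n : ℕ∞) g) {i : ℕ} (hi : i ≤ n)
    {x : ℝ} (hx : x ∈ Set.Icc (0:ℝ) 1) :
    iteratedDerivWithin i g (Set.Icc 0 1) x = iteratedDeriv i g x := by
  rw [iteratedDerivWithin_eq_iteratedFDerivWithin, iteratedDeriv_eq_iteratedFDeriv]
  congr 1
  exact (((contDiff_iff_ftaylorSeries.mp hg).hasFTaylorSeriesUpToOn
    (Set.Icc 0 1)).eq_iteratedFDerivWithin_of_uniqueDiffOn (by exact_mod_cast hi)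
    (uniqueDiffOn_Icc zero_lt_one) hx).symm

lemma norm_ifd0_sub {E : Type*} [NormedAddCommGroup E] [NormedSpace ℝ E]
    (f : E → ℝ) (x z : E) :
    ‖iteratedFDeriv ℝ 0 f x - iteratedFDeriv ℝ 0 f z‖ = |f x - f z| := by
  rw [iteratedFDeriv_zero_eq_comp]
  rw [show ((continuousMultilinearCurryFin0 ℝ E ℝ).symm ∘ f) x
        - ((continuousMultilinearCurryFin0 ℝ E ℝ).symm ∘ f) z
      = (continuousMultilinearCurryFin0 ℝ E ℝ).symm (f x - f z) by
    simp [Function.comp, map_sub]]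
  rw [LinearIsometryEquiv.norm_map]
  exact Real.norm_eq_abs _

lemma taylor_line_bound {E : Type*} [NormedAddCommGroup E] [NormedSpace ℝ E]
    {f : E → ℝ} {n : ℕ} (hf : ContDiff ℝ (n : ℕ∞) f) {β L : ℝ} (hβ0 : 0 ≤ β)
    (hL : 0 ≤ L)
    (hHol : ∀ x z, ‖iteratedFDeriv ℝ n f x - iteratedFDeriv ℝ n f z‖ ≤ L * ‖x - z‖ ^ β)
    (y v : E) :
    |f (y + v) - ∑ i ∈ Finset.range (n+1),
        (Nat.factorial i : ℝ)⁻¹ * iteratedFDeriv ℝ i f y (fun _ => v)|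
      ≤ L * ‖v‖ ^ n * ‖v‖ ^ β := by
  have hvβ : (0:ℝ) ≤ ‖v‖ ^ β := Real.rpow_nonneg (norm_nonneg v) β
  rcases Nat.eq_zero_or_pos n with hn | hn
  · subst hn
    simp only [Finset.range_one, Finset.sum_singleton, Nat.factorial_zero, Nat.cast_one,
      inv_one, one_mul, iteratedFDeriv_zero_apply, pow_zero]
    have := hHol (y + v) y
    rw [norm_ifd0_sub] at this
    simpa using this
  · obtain ⟨m, rfl⟩ : ∃ m, n = m + 1 := ⟨n - 1, (Nat.succ_pred_eq_of_pos hn).symm⟩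
    set g : ℝ → ℝ := fun t => f (y + t • v) with hgdef
    have hline : ContDiff ℝ ((m+1 : ℕ) : ℕ∞) (fun t : ℝ => y + t • v) :=
      contDiff_const.add (contDiff_id.smul contDiff_const)
    have hg : ContDiff ℝ ((m+1 : ℕ) : ℕ∞) g := hf.comp hline
    have hkey := line_iteratedDeriv hf y v
    have hdiff : DifferentiableOn ℝ (iteratedDerivWithin m g (Set.Icc 0 1)) (Set.Ioo 0 1) := by
      intro t ht
      have htIcc : t ∈ Set.Icc (0:ℝ) 1 := Set.Ioo_subset_Icc_self ht
      have hdm : Differentiable ℝ (iteratedDeriv m g) :=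
        hg.differentiable_iteratedDeriv m (by exact_mod_cast Nat.lt_succ_self m)
      exact ((hdm t).differentiableWithinAt).congr
        (fun s hs => itdw_eq hg (Nat.le_succ m) (Set.Ioo_subset_Icc_self hs))
        (itdw_eq hg (Nat.le_succ m) htIcc)
    obtain ⟨c, hc, heq⟩ := taylor_mean_remainder_lagrange (f := g) (x₀ := 0) (x := 1)
      zero_ne_one (by rw [Set.uIcc_of_le zero_le_one]; exact ((hg.of_le (by exact_mod_cast Nat.le_succ m)).contDiffOn))
      (by rw [Set.uIcc_of_le zero_le_one, Set.uIoo_of_le zero_le_one]; exact hdiff)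
    rw [Set.uIoo_of_le zero_le_one] at hc
    rw [Set.uIcc_of_le zero_le_one] at heq
    have hTay : taylorWithinEval g m (Set.Icc 0 1) 0 1
        = ∑ i ∈ Finset.range (m+1),
            (Nat.factorial i : ℝ)⁻¹ * iteratedFDeriv ℝ i f y (fun _ => v) := by
      rw [taylor_within_apply]
      refine Finset.sum_congr rfl fun i hi => ?_
      have hi' : i ≤ m + 1 := le_trans (Nat.lt_succ_iff.mp (Finset.mem_range.mp hi)) (Nat.le_succ m)
      rw [itdw_eq hg hi' (Set.left_mem_Icc.mpr zero_le_one), hkey i hi' 0]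
      simp [smul_eq_mul]
    have hnth : iteratedDerivWithin (m+1) g (Set.Icc 0 1) c
        = iteratedFDeriv ℝ (m+1) f (y + c • v) (fun _ => v) := by
      rw [itdw_eq hg le_rfl (Set.Ioo_subset_Icc_self hc), hkey (m+1) le_rfl c]
    have hg1 : g 1 = f (y + v) := by simp [hgdef]
    have hsum : (∑ i ∈ Finset.range (m+1+1),
        (Nat.factorial i : ℝ)⁻¹ * iteratedFDeriv ℝ i f y (fun _ => v))
        = (∑ i ∈ Finset.range (m+1),
            (Nat.factorial i : ℝ)⁻¹ * iteratedFDeriv ℝ i f y (fun _ => v))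
          + (Nat.factorial (m+1) : ℝ)⁻¹ * iteratedFDeriv ℝ (m+1) f y (fun _ => v) :=
      Finset.sum_range_succ _ _
    have key : f (y + v) - ∑ i ∈ Finset.range (m+1+1),
        (Nat.factorial i : ℝ)⁻¹ * iteratedFDeriv ℝ i f y (fun _ => v)
        = (iteratedFDeriv ℝ (m+1) f (y + c • v) (fun _ => v)
            - iteratedFDeriv ℝ (m+1) f y (fun _ => v)) / (Nat.factorial (m+1) : ℝ) := by
      rw [sub_zero, one_pow, mul_one, hTay] at heq
      rw [← hg1, hsum, sub_add_eq_sub_sub, heq, hnth]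
      field_simp
    rw [key]
    have hb1 : |iteratedFDeriv ℝ (m+1) f (y + c • v) (fun _ => v)
        - iteratedFDeriv ℝ (m+1) f y (fun _ => v)|
        ≤ L * ‖v‖ ^ β * ‖v‖ ^ (m+1) := by
      have h1 : iteratedFDeriv ℝ (m+1) f (y + c • v) (fun _ => v)
          - iteratedFDeriv ℝ (m+1) f y (fun _ => v)
          = (iteratedFDeriv ℝ (m+1) f (y + c • v) - iteratedFDeriv ℝ (m+1) f y)
              (fun _ => v) := by
        simp [ContinuousMultilinearMap.sub_apply]
      rw [h1, ← Real.norm_eq_abs]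
      calc ‖(iteratedFDeriv ℝ (m+1) f (y + c • v) - iteratedFDeriv ℝ (m+1) f y)
              (fun _ => v)‖
          ≤ ‖iteratedFDeriv ℝ (m+1) f (y + c • v) - iteratedFDeriv ℝ (m+1) f y‖
            * ∏ _i : Fin (m+1), ‖v‖ :=
            ContinuousMultilinearMap.le_opNorm _ _
        _ ≤ (L * ‖(y + c • v) - y‖ ^ β) * ‖v‖ ^ (m+1) := by
            rw [Finset.prod_const, Finset.card_univ, Fintype.card_fin]
            exact mul_le_mul_of_nonneg_right (hHol _ _) (pow_nonneg (norm_nonneg v) _)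
        _ ≤ (L * ‖v‖ ^ β) * ‖v‖ ^ (m+1) := by
            refine mul_le_mul_of_nonneg_right (mul_le_mul_of_nonneg_left ?_ hL)
              (pow_nonneg (norm_nonneg v) _)
            have hnm : ‖(y + c • v) - y‖ = c * ‖v‖ := by
              rw [add_sub_cancel_left, norm_smul, Real.norm_eq_abs, abs_of_pos hc.1]
            rw [hnm, Real.mul_rpow hc.1.le (norm_nonneg v)]
            calc c ^ β * ‖v‖ ^ β ≤ 1 * ‖v‖ ^ β :=
                  mul_le_mul_of_nonneg_right
                    (Real.rpow_le_one hc.1.le hc.2.le hβ0) hvβ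
              _ = ‖v‖ ^ β := one_mul _
        _ = L * ‖v‖ ^ β * ‖v‖ ^ (m+1) := rfl
    have hfact : (1:ℝ) ≤ (Nat.factorial (m+1) : ℝ) := by
      exact_mod_cast Nat.one_le_iff_ne_zero.mpr (Nat.factorial_ne_zero (m+1))
    calc |(iteratedFDeriv ℝ (m+1) f (y + c • v) (fun _ => v)
            - iteratedFDeriv ℝ (m+1) f y (fun _ => v)) / (Nat.factorial (m+1) : ℝ)|
        = |iteratedFDeriv ℝ (m+1) f (y + c • v) (fun _ => v)
            - iteratedFDeriv ℝ (m+1) f y (fun _ => v)| / (Nat.factorial (m+1) : ℝ) := by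
          rw [abs_div, abs_of_pos (by positivity : (0:ℝ) < (Nat.factorial (m+1) : ℝ))]
      _ ≤ |iteratedFDeriv ℝ (m+1) f (y + c • v) (fun _ => v)
            - iteratedFDeriv ℝ (m+1) f y (fun _ => v)| :=
          div_le_self (abs_nonneg _) hfact
      _ ≤ L * ‖v‖ ^ β * ‖v‖ ^ (m+1) := hb1
      _ = L * ‖v‖ ^ (m+1) * ‖v‖ ^ β := by ring

lemma prod_eval_eq {d i : ℕ} (c : Fin i → Fin d) (u : Fin d → ℝ) :
    (∏ m : Fin i, u (c m))
      = ∏ j : Fin d, u j ^ (Finset.univ.filter (fun m => c m = j)).card := by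
  rw [← Finset.prod_fiberwise_of_maps_to (fun m _ => Finset.mem_univ (c m)) (fun m => u (c m))]
  refine Finset.prod_congr rfl fun j _ => ?_
  rw [Finset.prod_congr rfl (fun m hm => by rw [(Finset.mem_filter.mp hm).2]), Finset.prod_const]

lemma basic_zero {d : ℕ} {kbar : ℝ → ℝ} {NN : ℕ}
    (hkmom : ∀ j : ℕ, 1 ≤ j → j ≤ NN → (∫ t, t ^ j * kbar t) = 0)
    {i : ℕ} (hi1 : 0 < i) (hiN : i ≤ NN) (c : Fin i → Fin d) :
    ∫ x : Fin d → ℝ, (∏ j, kbar (x j)) * (∏ m, x (c m)) = 0 := by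
  have h1 : ∀ x : Fin d → ℝ, (∏ j, kbar (x j)) * (∏ m, x (c m))
      = ∏ j, (x j ^ (Finset.univ.filter (fun m => c m = j)).card * kbar (x j)) := by
    intro x
    rw [prod_eval_eq c x, Finset.prod_mul_distrib, mul_comm]
  simp_rw [h1]
  rw [MeasureTheory.integral_fintype_prod_volume_eq_prod
    (fun j (t : ℝ) => t ^ (Finset.univ.filter (fun m => c m = j)).card * kbar t)]
  refine Finset.prod_eq_zero (Finset.mem_univ (c ⟨0, hi1⟩)) (hkmom _ ?_ ?_)
  · exact Nat.one_le_iff_ne_zero.mpr (Finset.card_ne_zero_of_mem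
      (Finset.mem_filter.mpr ⟨Finset.mem_univ _, rfl⟩))
  · calc (Finset.univ.filter (fun m => c m = c ⟨0, hi1⟩)).card
        ≤ (Finset.univ : Finset (Fin i)).card := Finset.card_filter_le _ _
      _ = i := by simp
      _ ≤ NN := hiN

lemma ml_expand {d i : ℕ}
    (T : ContinuousMultilinearMap ℝ (fun _ : Fin i => EuclideanSpace ℝ (Fin d)) ℝ)
    (u : EuclideanSpace ℝ (Fin d)) :
    T (fun _ => u) = ∑ c : Fin i → Fin d,
      (∏ m, u (c m)) • T (fun m => EuclideanSpace.single (c m) 1) := by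
  have hu : u = ∑ j : Fin d, u j • EuclideanSpace.single j (1:ℝ) := by
    have := (EuclideanSpace.basisFun (Fin d) ℝ).sum_repr u
    simp only [EuclideanSpace.basisFun_repr, EuclideanSpace.basisFun_apply] at this
    exact this.symm
  calc T (fun _ => u) = T (fun _ => ∑ j : Fin d, u j • EuclideanSpace.single j (1:ℝ)) := by
        rw [← hu]
    _ = ∑ c : Fin i → Fin d, T (fun m => u (c m) • EuclideanSpace.single (c m) (1:ℝ)) :=
        T.toMultilinearMap.map_sum (fun m j => u j • EuclideanSpace.single j (1:ℝ))
    _ = ∑ c : Fin i → Fin d, (∏ m, u (c m)) • T (fun m => EuclideanSpace.single (c m) 1) :=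
        Finset.sum_congr rfl fun c _ =>
          T.toMultilinearMap.map_smul_univ (fun m => u (c m))
            (fun m => EuclideanSpace.single (c m) 1)

lemma eint (d : ℕ) (G : (Fin d → ℝ) → ℝ) :
    ∫ x : EuclideanSpace ℝ (Fin d), G x = ∫ x : Fin d → ℝ, G x :=
  (EuclideanSpace.volume_preserving_symm_measurableEquiv_toLp (ι := Fin d)).integral_comp
    (MeasurableEquiv.toLp 2 (Fin d → ℝ)).symm.measurableEmbedding G

lemma prod_kbar_zero {d : ℕ} {kbar : ℝ → ℝ}
    (hksupp : Function.support kbar ⊆ Set.Icc 0 1)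
    {x : Fin d → ℝ} (hx : x ∉ Set.pi Set.univ (fun _ : Fin d => Set.Icc (0:ℝ) 1)) :
    (∏ j, kbar (x j)) = 0 := by
  rw [Set.mem_univ_pi] at hx; push_neg at hx
  obtain ⟨j, hj⟩ := hx
  exact Finset.prod_eq_zero (Finset.mem_univ j)
    (by by_contra hne; exact hj (hksupp (Function.mem_support.mpr hne)))

lemma prod_kbar_le {d : ℕ} {kbar : ℝ → ℝ} {M : ℝ} (hM : ∀ t, |kbar t| ≤ M)
    (x : Fin d → ℝ) : |∏ j, kbar (x j)| ≤ M ^ d := by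
  rw [Finset.abs_prod]
  calc (∏ j, |kbar (x j)|) ≤ ∏ _j : Fin d, M :=
        Finset.prod_le_prod (fun j _ => abs_nonneg _) (fun j _ => hM _)
    _ = M ^ d := by rw [Finset.prod_const, Finset.card_univ, Fintype.card_fin]

lemma integrablePi {d : ℕ} {kbar : ℝ → ℝ} (hkmeas : Measurable kbar) {M : ℝ}
    (hM : ∀ t, |kbar t| ≤ M) (hksupp : Function.support kbar ⊆ Set.Icc 0 1)
    {g : (Fin d → ℝ) → ℝ} (hg : Continuous g) :
    Integrable (fun x : Fin d → ℝ => (∏ j, kbar (x j)) * g x) := by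
  set Box : Set (Fin d → ℝ) := Set.pi Set.univ (fun _ => Set.Icc (0:ℝ) 1) with hBox
  have hBoxm : MeasurableSet Box := MeasurableSet.univ_pi (fun _ => measurableSet_Icc)
  have hBoxc : IsCompact Box := isCompact_univ_pi (fun _ => isCompact_Icc)
  obtain ⟨Bg, hBg⟩ := hBoxc.exists_bound_of_continuousOn hg.continuousOn
  have hM0 : 0 ≤ M := le_trans (abs_nonneg _) (hM 0)
  refine MeasureTheory.Integrable.mono'
    (g := Box.indicator (fun _ => M ^ d * Bg))
    ((integrable_indicator_iff hBoxm).mpr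
      (integrableOn_const hBoxc.measure_lt_top.ne))
    (((Finset.measurable_prod Finset.univ
        (fun j _ => hkmeas.comp (measurable_pi_apply j))).mul
      hg.measurable).aestronglyMeasurable)
    (Filter.Eventually.of_forall fun x => ?_)
  by_cases hx : x ∈ Box
  · rw [Set.indicator_of_mem hx, Real.norm_eq_abs, abs_mul]
    have h2 : |g x| ≤ Bg := by simpa [Real.norm_eq_abs] using hBg x hx
    have h3 : (0:ℝ) ≤ Bg := le_trans (abs_nonneg _) h2
    exact mul_le_mul (prod_kbar_le hM x) h2 (abs_nonneg _) (pow_nonneg hM0 d)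
  · rw [Set.indicator_of_notMem hx, prod_kbar_zero hksupp hx, zero_mul]
    simp

lemma integrableE {d : ℕ} {kbar : ℝ → ℝ} (hkmeas : Measurable kbar) {M : ℝ}
    (hM : ∀ t, |kbar t| ≤ M) (hksupp : Function.support kbar ⊆ Set.Icc 0 1)
    {g : EuclideanSpace ℝ (Fin d) → ℝ} (hg : Continuous g) :
    Integrable (fun u : EuclideanSpace ℝ (Fin d) => (∏ j, kbar (u j)) * g u) := by
  have hPi : Integrable (fun x : Fin d → ℝ => (∏ j, kbar (x j)) *
      g ((PiLp.continuousLinearEquiv 2 ℝ (fun _ : Fin d => ℝ)).symm x)) :=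
    integrablePi hkmeas hM hksupp
      (hg.comp (PiLp.continuousLinearEquiv 2 ℝ (fun _ : Fin d => ℝ)).symm.continuous)
  exact ((EuclideanSpace.volume_preserving_symm_measurableEquiv_toLp (ι := Fin d)).integrable_comp_emb
    (MeasurableEquiv.toLp 2 (Fin d → ℝ)).symm.measurableEmbedding).mpr hPi

end KDEAux

/-- Kernel density estimator bias bound with vanishing moments: if the kernel `k̄` is
bounded, measurable, supported in `[0,1]`, integrates to `1`, and has vanishing moments
of orders `1, …, ⌈α⌉`, and `ν : ℝ^d → ℝ` is `α`-Hölder with Hölder norm at most `L`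
(derivatives up to order `⌊α⌋` bounded by `L` and `⌊α⌋`-th derivative
`(α−⌊α⌋)`-Hölder with constant `L`), then there is `C` (depending only on `d, α, L, k̄`)
such that for all bandwidths `h ∈ (0,1]` and all `y`,
`|∫ h^{−d} ∏_j k̄((z_j − y_j)/h) ν(z) dz − ν(y)| ≤ C h^α`. -/
theorem kde_bias_bound (d : ℕ) (hd : 0 < d) (α L : ℝ) (hα : 0 < α) (hL : 0 ≤ L)
    (kbar : ℝ → ℝ) (hkmeas : Measurable kbar) (hkbdd : ∃ M, ∀ t, |kbar t| ≤ M)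
    (hksupp : Function.support kbar ⊆ Set.Icc 0 1)
    (hkint : (∫ t, kbar t) = 1)
    (hkmom : ∀ j : ℕ, 1 ≤ j → j ≤ ⌈α⌉₊ → (∫ t, t ^ j * kbar t) = 0)
    (ν : EuclideanSpace ℝ (Fin d) → ℝ)
    (hν₁ : ContDiff ℝ (⌊α⌋₊ : ℕ∞) ν)
    (hν₂ : ∀ i : ℕ, i ≤ ⌊α⌋₊ → ∀ x, ‖iteratedFDeriv ℝ i ν x‖ ≤ L)
    (hν₃ : ∀ x y, ‖iteratedFDeriv ℝ ⌊α⌋₊ ν x - iteratedFDeriv ℝ ⌊α⌋₊ ν y‖ ≤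
      L * ‖x - y‖ ^ (α - (⌊α⌋₊ : ℝ))) :
    ∃ C > (0 : ℝ), ∀ h : ℝ, 0 < h → h ≤ 1 → ∀ y : EuclideanSpace ℝ (Fin d),
      |(∫ z : EuclideanSpace ℝ (Fin d),
          (∏ j, kbar ((z j - y j) / h)) / h ^ d * ν z) - ν y| ≤ C * h ^ α := by
  classical
  obtain ⟨M, hM⟩ := hkbdd
  have hM0 : (0:ℝ) ≤ M := le_trans (abs_nonneg _) (hM 0)
  have hd1 : (1:ℝ) ≤ (d:ℝ) := by exact_mod_cast hd
  have hd0 : (0:ℝ) < (d:ℝ) := lt_of_lt_of_le one_pos hd1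
  have hβ0 : 0 ≤ α - (⌊α⌋₊ : ℝ) := sub_nonneg.mpr (Nat.floor_le hα.le)
  have hCnn : (0:ℝ) ≤ M ^ d * (L * (d:ℝ) ^ α) :=
    mul_nonneg (pow_nonneg hM0 d) (mul_nonneg hL (Real.rpow_nonneg hd0.le α))
  refine ⟨M ^ d * (L * (d:ℝ) ^ α) + 1, by linarith, ?_⟩
  intro h hh hh1 y
  have hhd : (0:ℝ) < h ^ d := pow_pos hh d
  have hα' : (0:ℝ) < h ^ α := Real.rpow_pos_of_pos hh α
  have hev : ∀ j : Fin d, Continuous (fun u : EuclideanSpace ℝ (Fin d) => u j) :=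
    fun j => (continuous_apply j).comp
      (PiLp.continuousLinearEquiv 2 ℝ (fun _ : Fin d => ℝ)).continuous
  set S : EuclideanSpace ℝ (Fin d) → ℝ := fun u => ∑ i ∈ Finset.range (⌊α⌋₊+1),
    (Nat.factorial i : ℝ)⁻¹ * iteratedFDeriv ℝ i ν y (fun _ => h • u) with hS
  -- continuity facts
  have hcontT : ∀ i : ℕ, Continuous (fun u : EuclideanSpace ℝ (Fin d) =>
      iteratedFDeriv ℝ i ν y (fun _ => h • u)) := fun i =>
    (iteratedFDeriv ℝ i ν y).cont.comp (continuous_pi fun _ => continuous_const_smul h)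
  have hcontS : Continuous S := by
    rw [hS]
    exact continuous_finset_sum _ fun i _ => continuous_const.mul (hcontT i)
  have hcontν : Continuous (fun u : EuclideanSpace ℝ (Fin d) => ν (y + h • u)) :=
    hν₁.continuous.comp (continuous_const.add (continuous_const_smul h))
  -- Step 1 : change of variables
  have step1 : (∫ z : EuclideanSpace ℝ (Fin d), (∏ j, kbar ((z j - y j) / h)) / h ^ d * ν z)
      = ∫ u : EuclideanSpace ℝ (Fin d), (∏ j, kbar (u j)) * ν (y + h • u) := by
    have e1 := MeasureTheory.Measure.integral_comp_smul_of_nonneg (μ := volume)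
      (f := fun w : EuclideanSpace ℝ (Fin d) =>
        (∏ j, kbar (((y + w) j - y j) / h)) / h ^ d * ν (y + w)) (R := h) (hR := hh.le)
    have e2 := MeasureTheory.integral_add_left_eq_self (μ := volume)
      (fun z : EuclideanSpace ℝ (Fin d) => (∏ j, kbar ((z j - y j) / h)) / h ^ d * ν z) y
    rw [e2, finrank_euclideanSpace_fin] at e1
    have e3 : ∀ u : EuclideanSpace ℝ (Fin d),
        (∏ j, kbar (((y + h • u) j - y j) / h)) / h ^ d * ν (y + h • u)
        = (h ^ d)⁻¹ * ((∏ j, kbar (u j)) * ν (y + h • u)) := by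
      intro u
      have hc : ∀ j, ((y + h • u) j - y j) / h = u j := by
        intro j
        simp only [PiLp.add_apply, PiLp.smul_apply, smul_eq_mul]
        rw [add_sub_cancel_left, mul_div_cancel_left₀ _ hh.ne']
      simp_rw [hc]
      ring
    simp_rw [e3] at e1
    rw [MeasureTheory.integral_const_mul, smul_eq_mul] at e1
    exact (mul_left_cancel₀ (inv_ne_zero hhd.ne') e1).symm
  -- kernel integrates to 1
  have hker1 : (∫ u : EuclideanSpace ℝ (Fin d), ∏ j, kbar (u j)) = 1 := by
    rw [KDEAux.eint d (fun x => ∏ j, kbar (x j)),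
      MeasureTheory.integral_fintype_prod_volume_eq_pow kbar, hkint, one_pow]
  -- integrability
  have hint1 : Integrable (fun u : EuclideanSpace ℝ (Fin d) =>
      (∏ j, kbar (u j)) * ν (y + h • u)) :=
    KDEAux.integrableE hkmeas hM hksupp hcontν
  have hint2 : Integrable (fun u : EuclideanSpace ℝ (Fin d) => (∏ j, kbar (u j)) * ν y) :=
    KDEAux.integrableE hkmeas hM hksupp continuous_const
  have hintR : Integrable (fun u : EuclideanSpace ℝ (Fin d) =>
      (∏ j, kbar (u j)) * (ν (y + h • u) - S u)) :=
    KDEAux.integrableE hkmeas hM hksupp (hcontν.sub hcontS)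
  have hintS : Integrable (fun u : EuclideanSpace ℝ (Fin d) =>
      (∏ j, kbar (u j)) * (S u - ν y)) :=
    KDEAux.integrableE hkmeas hM hksupp (hcontS.sub continuous_const)
  -- vanishing moments
  have hsub : ∀ i : ℕ, 0 < i → i ≤ ⌊α⌋₊ →
      (∫ u : EuclideanSpace ℝ (Fin d),
        (∏ j, kbar (u j)) * iteratedFDeriv ℝ i ν y (fun _ => h • u)) = 0 := by
    intro i hi1 hin
    have hexp : ∀ u : EuclideanSpace ℝ (Fin d),
        (∏ j, kbar (u j)) * iteratedFDeriv ℝ i ν y (fun _ => h • u)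
        = ∑ c : Fin i → Fin d,
            (h ^ i * iteratedFDeriv ℝ i ν y (fun m => EuclideanSpace.single (c m) 1))
              * ((∏ j, kbar (u j)) * ∏ m, u (c m)) := by
      intro u
      rw [KDEAux.ml_expand (iteratedFDeriv ℝ i ν y) (h • u), Finset.mul_sum]
      refine Finset.sum_congr rfl fun c _ => ?_
      have hsm : ∀ m : Fin i, (h • u) (c m) = h * u (c m) := by
        intro m; simp only [PiLp.smul_apply, smul_eq_mul]
      simp_rw [hsm]
      rw [Finset.prod_mul_distrib, Finset.prod_const, Finset.card_univ, Fintype.card_fin,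
        smul_eq_mul]
      ring
    simp_rw [hexp]
    rw [MeasureTheory.integral_finset_sum]
    · refine Finset.sum_eq_zero fun c _ => ?_
      rw [MeasureTheory.integral_const_mul]
      have hbz : (∫ u : EuclideanSpace ℝ (Fin d), (∏ j, kbar (u j)) * ∏ m, u (c m)) = 0 := by
        rw [KDEAux.eint d (fun x => (∏ j, kbar (x j)) * ∏ m, x (c m))]
        exact KDEAux.basic_zero hkmom hi1 (le_trans hin (Nat.floor_le_ceil α)) c
      rw [hbz, mul_zero]
    · intro c _
      exact (KDEAux.integrableE hkmeas hM hksupp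
        (continuous_finset_prod _ fun m _ => hev (c m))).const_mul _
  have hmom : (∫ u : EuclideanSpace ℝ (Fin d), (∏ j, kbar (u j)) * (S u - ν y)) = 0 := by
    have hSexp : ∀ u : EuclideanSpace ℝ (Fin d), (∏ j, kbar (u j)) * (S u - ν y)
        = ∑ i ∈ Finset.range ⌊α⌋₊, (Nat.factorial (i+1) : ℝ)⁻¹
            * ((∏ j, kbar (u j)) * iteratedFDeriv ℝ (i+1) ν y (fun _ => h • u)) := by
      intro u
      have h0 : S u = (∑ i ∈ Finset.range ⌊α⌋₊,
          (Nat.factorial (i+1) : ℝ)⁻¹ * iteratedFDeriv ℝ (i+1) ν y (fun _ => h • u)) + ν y := by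
        simp only [hS]
        rw [Finset.sum_range_succ']
        simp [iteratedFDeriv_zero_apply]
      rw [h0, add_sub_cancel_right, Finset.mul_sum]
      exact Finset.sum_congr rfl fun i _ => by ring
    simp_rw [hSexp]
    rw [MeasureTheory.integral_finset_sum]
    · refine Finset.sum_eq_zero fun i hi => ?_
      rw [MeasureTheory.integral_const_mul,
        hsub (i+1) (Nat.succ_pos i) (Nat.succ_le_of_lt (Finset.mem_range.mp hi)), mul_zero]
    · intro i _
      exact (KDEAux.integrableE hkmeas hM hksupp (hcontT (i+1))).const_mul _
  -- decomposition
  have decomp : (∫ u : EuclideanSpace ℝ (Fin d), (∏ j, kbar (u j)) * ν (y + h • u)) - ν y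
      = ∫ u : EuclideanSpace ℝ (Fin d), (∏ j, kbar (u j)) * (ν (y + h • u) - S u) := by
    have d1 : (∫ u : EuclideanSpace ℝ (Fin d), (∏ j, kbar (u j)) * ν (y + h • u)) - ν y
        = ∫ u : EuclideanSpace ℝ (Fin d),
            ((∏ j, kbar (u j)) * ν (y + h • u) - (∏ j, kbar (u j)) * ν y) := by
      rw [MeasureTheory.integral_sub hint1 hint2]
      congr 1
      rw [MeasureTheory.integral_mul_const, hker1, one_mul]
    rw [d1]
    have d2 : ∀ u : EuclideanSpace ℝ (Fin d),
        (∏ j, kbar (u j)) * ν (y + h • u) - (∏ j, kbar (u j)) * ν y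
        = (∏ j, kbar (u j)) * (ν (y + h • u) - S u)
          + (∏ j, kbar (u j)) * (S u - ν y) := fun u => by ring
    simp_rw [d2]
    rw [MeasureTheory.integral_add hintR hintS, hmom, add_zero]
  -- the remainder bound
  have hbound : |∫ u : EuclideanSpace ℝ (Fin d), (∏ j, kbar (u j)) * (ν (y + h • u) - S u)|
      ≤ M ^ d * (L * (d:ℝ) ^ α) * h ^ α := by
    set toE := (PiLp.continuousLinearEquiv 2 ℝ (fun _ : Fin d => ℝ)).symm with htoE
    have t2 : (∫ u : EuclideanSpace ℝ (Fin d), (∏ j, kbar (u j)) * (ν (y + h • u) - S u))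
        = ∫ x : Fin d → ℝ, (∏ j, kbar (x j)) * (ν (y + h • toE x) - S (toE x)) :=
      KDEAux.eint d (fun x => (∏ j, kbar (x j)) * (ν (y + h • toE x) - S (toE x)))
    rw [t2, ← Real.norm_eq_abs]
    set Box : Set (Fin d → ℝ) := Set.pi Set.univ (fun _ => Set.Icc (0:ℝ) 1) with hBox
    have hBoxm : MeasurableSet Box := MeasurableSet.univ_pi (fun _ => measurableSet_Icc)
    set Cst : ℝ := M ^ d * (L * (h * d) ^ α) with hCst
    have hdom : Integrable (Box.indicator (fun _ => Cst)) :=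
      (integrable_indicator_iff hBoxm).mpr (integrableOn_const
        (isCompact_univ_pi (fun _ => isCompact_Icc)).measure_lt_top.ne)
    have hrd : (0:ℝ) < h * d := mul_pos hh hd0
    have hptw : ∀ x : Fin d → ℝ,
        ‖(∏ j, kbar (x j)) * (ν (y + h • toE x) - S (toE x))‖
        ≤ Box.indicator (fun _ => Cst) x := by
      intro x
      by_cases hx : x ∈ Box
      · rw [Set.indicator_of_mem hx, Real.norm_eq_abs, abs_mul]
        have hvle : ‖h • toE x‖ ≤ h * d := by
          rw [norm_smul, Real.norm_eq_abs, abs_of_pos hh]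
          refine mul_le_mul_of_nonneg_left ?_ hh.le
          have hsum : (∑ j, ‖toE x j‖ ^ 2) ≤ (d:ℝ) := by
            calc (∑ j, ‖toE x j‖ ^ 2) ≤ ∑ _j : Fin d, (1:ℝ) := by
                  refine Finset.sum_le_sum fun j _ => ?_
                  show ‖x j‖ ^ 2 ≤ 1
                  have hxj := (Set.mem_univ_pi.mp hx) j
                  rw [Real.norm_eq_abs, abs_of_nonneg hxj.1]
                  nlinarith [hxj.1, hxj.2]
              _ = (d:ℝ) := by simp
          calc ‖toE x‖ = Real.sqrt (∑ j, ‖toE x j‖ ^ 2) := EuclideanSpace.norm_eq (toE x)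
            _ ≤ Real.sqrt (d:ℝ) := Real.sqrt_le_sqrt hsum
            _ ≤ Real.sqrt ((d:ℝ)^2) := Real.sqrt_le_sqrt (by nlinarith)
            _ = (d:ℝ) := Real.sqrt_sq hd0.le
        have hT := KDEAux.taylor_line_bound (n := ⌊α⌋₊) hν₁ hβ0 hL hν₃ y (h • toE x)
        have hR : |ν (y + h • toE x) - S (toE x)| ≤ L * (h * d) ^ α := by
          have hT' : |ν (y + h • toE x) - S (toE x)|
              ≤ L * ‖h • toE x‖ ^ ⌊α⌋₊ * ‖h • toE x‖ ^ (α - (⌊α⌋₊:ℝ)) := by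
            rw [hS]; exact hT
          refine le_trans hT' ?_
          have hv0 : (0:ℝ) ≤ ‖h • toE x‖ := norm_nonneg _
          calc L * ‖h • toE x‖ ^ ⌊α⌋₊ * ‖h • toE x‖ ^ (α - (⌊α⌋₊:ℝ))
              ≤ L * (h*d) ^ ⌊α⌋₊ * (h*d) ^ (α - (⌊α⌋₊:ℝ)) := by
                refine mul_le_mul (mul_le_mul_of_nonneg_left
                  (pow_le_pow_left₀ hv0 hvle _) hL)
                  (Real.rpow_le_rpow hv0 hvle hβ0)
                  (Real.rpow_nonneg hv0 _)
                  (mul_nonneg hL (pow_nonneg hrd.le _))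
            _ = L * (h*d) ^ α := by
                rw [mul_assoc, ← Real.rpow_natCast (h*d) ⌊α⌋₊, ← Real.rpow_add hrd]
                rw [show (⌊α⌋₊:ℝ) + (α - (⌊α⌋₊:ℝ)) = α by ring]
        calc |∏ j, kbar (x j)| * |ν (y + h • toE x) - S (toE x)|
            ≤ M ^ d * (L * (h*d) ^ α) :=
              mul_le_mul (KDEAux.prod_kbar_le hM x) hR (abs_nonneg _) (pow_nonneg hM0 d)
          _ = Cst := rfl
      · rw [Set.indicator_of_notMem hx, KDEAux.prod_kbar_zero hksupp hx, zero_mul]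
        simp
    calc ‖∫ x : Fin d → ℝ, (∏ j, kbar (x j)) * (ν (y + h • toE x) - S (toE x))‖
        ≤ ∫ x : Fin d → ℝ, Box.indicator (fun _ => Cst) x :=
          MeasureTheory.norm_integral_le_of_norm_le hdom (Filter.Eventually.of_forall hptw)
      _ = (volume Box).toReal • Cst := MeasureTheory.integral_indicator_const Cst hBoxm
      _ = Cst := by
          rw [hBox, MeasureTheory.volume_pi_pi]
          simp [Real.volume_Icc]
      _ = M ^ d * (L * (d:ℝ) ^ α) * h ^ α := by
          rw [hCst, Real.mul_rpow hh.le hd0.le]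
          ring
  rw [step1, decomp]
  refine le_trans hbound ?_
  have : M ^ d * (L * (d:ℝ) ^ α) ≤ M ^ d * (L * (d:ℝ) ^ α) + 1 := by linarith
  exact mul_le_mul_of_nonneg_right this hα'.le
end
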